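/- arXiv:2102.01361 — 9 statements merged into one kernel-verified Lean document; each statement's English description precedes it below -/
import Mathlib

section
/- Let {C₁,…,C_k} be a partition of the candidate set C such that every voter's ranking places all candidates of C_i before all candidates of C_j whenever i < j, and let π be a ranking preserving this partition. If σ is any ranking, then the ranking ζ preserving the partition in which candidates within each C_i are ordered as in σ satisfies K(ζ, π_v) ≤ K(σ, π_v) for every voter v. -/
/-- A ranking of `m` candidates: a permutation assigning each candidate its position. -/
abbrev Ranking (m : ℕ) := Equiv.Perm (Fin m)

/-- The Kendall distance: number of unordered pairs of candidates on whose
relative order the two rankings disagree. -/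
def kendall {m : ℕ} (π σ : Ranking m) : ℕ :=
  ((Finset.univ : Finset (Fin m × Fin m)).filter
    (fun p => p.1 < p.2 ∧ ¬ ((π p.1 < π p.2) ↔ (σ p.1 < σ p.2)))).card

/-- Number of voters who strictly prefer `σ` to `π`. -/
def prefCount {m n : ℕ} (prof : Fin n → Ranking m) (σ π : Ranking m) : ℕ :=
  (Finset.univ.filter (fun v => kendall σ (prof v) < kendall π (prof v))).card

/-- `π` is absolutely popular: no ranking is preferred by a strict majority of all voters. -/
def absPop {m n : ℕ} (prof : Fin n → Ranking m) (π : Ranking m) : Prop :=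
  ∀ σ : Ranking m, ¬ (2 * prefCount prof σ π > n)

/-- `π` is simply popular: no ranking is preferred by strictly more voters than prefer `π`. -/
def simPop {m n : ℕ} (prof : Fin n → Ranking m) (π : Ranking m) : Prop :=
  ∀ σ : Ranking m, ¬ (prefCount prof σ π > prefCount prof π σ)

/-- Strict majority of the voters rank `a` before `b`. -/
def maj {m n : ℕ} (prof : Fin n → Ranking m) (a b : Fin m) : Prop :=
  2 * (Finset.univ.filter (fun v => prof v a < prof v b)).card > n

/-- `π` is topologically sorted: it ranks `a` before `b` whenever a strict
majority of voters does. -/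
def topSorted {m n : ℕ} (prof : Fin n → Ranking m) (π : Ranking m) : Prop :=
  ∀ a b : Fin m, maj prof a b → π a < π b

/-- `σ` is obtained from `π` by a single swap of candidates occupying adjacent positions. -/
def adjSwap {m : ℕ} (π σ : Ranking m) : Prop :=
  ∃ i j : Fin m, (i : ℕ) + 1 = (j : ℕ) ∧ σ = π.trans (Equiv.swap i j)

/-- A directed relation is acyclic: no directed cycle. -/
def acyclicRel {α : Type*} (r : α → α → Prop) : Prop :=
  ∀ a, ¬ Relation.TransGen r a a

theorem preserve_partition_closer {m k : ℕ} {V : Type*} [Fintype V]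
    (prof : V → Ranking m) (cl : Fin m → Fin k)
    (hvoters : ∀ (v : V) (a b : Fin m), cl a < cl b → prof v a < prof v b)
    (π : Ranking m) (hπ : ∀ a b : Fin m, cl a < cl b → π a < π b)
    (σ ζ : Ranking m)
    (hζpres : ∀ a b : Fin m, cl a < cl b → ζ a < ζ b)
    (hwithin : ∀ a b : Fin m, cl a = cl b → (ζ a < ζ b ↔ σ a < σ b)) :
    ∀ v : V, kendall ζ (prof v) ≤ kendall σ (prof v) := by
  intro v
  apply Finset.card_le_card
  intro p hp
  simp only [Finset.mem_filter, Finset.mem_univ, true_and] at hp ⊢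
  obtain ⟨hlt, hdis⟩ := hp
  refine ⟨hlt, ?_⟩
  rcases lt_trichotomy (cl p.1) (cl p.2) with h | h | h
  · exact absurd (iff_of_true (hζpres _ _ h) (hvoters v _ _ h)) hdis
  · rw [← hwithin _ _ h]; exact hdis
  · have h1 := hζpres _ _ h
    have h2 := hvoters v _ _ h
    exact absurd (iff_of_false (not_lt_of_gt h1) (not_lt_of_gt h2)) hdis
end

section
/- If σ₁ ≠ π are rankings and v is a voter abstaining between σ₁ and π (i.e. K(σ₁,π_v)=K(π,π_v)), then, letting D(σ₁,π) be the set of candidate pairs on whose order σ₁ and π disagree, v agrees with π on exactly half of the pairs in D(σ₁,π) and disagrees on the other half; in particular |D(σ₁,π)| is even. -/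
theorem abstainer_agrees_on_half {m : ℕ} (σ₁ π πv : Ranking m) (hne : σ₁ ≠ π)
    (habs : kendall σ₁ πv = kendall π πv) :
    2 * ((Finset.univ : Finset (Fin m × Fin m)).filter
        (fun p => p.1 < p.2 ∧ ¬ ((σ₁ p.1 < σ₁ p.2) ↔ (π p.1 < π p.2)) ∧
          ((πv p.1 < πv p.2) ↔ (π p.1 < π p.2)))).card = kendall σ₁ π ∧
    Even (kendall σ₁ π) := by
  classical
  set A : Finset (Fin m × Fin m) := Finset.univ.filter
      (fun p => p.1 < p.2 ∧ ¬ ((σ₁ p.1 < σ₁ p.2) ↔ (π p.1 < π p.2)) ∧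
        ((πv p.1 < πv p.2) ↔ (π p.1 < π p.2))) with hAdef
  set B : Finset (Fin m × Fin m) := Finset.univ.filter
      (fun p => p.1 < p.2 ∧ ¬ ((σ₁ p.1 < σ₁ p.2) ↔ (π p.1 < π p.2)) ∧
        ¬ ((πv p.1 < πv p.2) ↔ (π p.1 < π p.2))) with hBdef
  set C : Finset (Fin m × Fin m) := Finset.univ.filter
      (fun p => p.1 < p.2 ∧ ((σ₁ p.1 < σ₁ p.2) ↔ (π p.1 < π p.2)) ∧
        ¬ ((πv p.1 < πv p.2) ↔ (π p.1 < π p.2))) with hCdef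
  have hdisjAB : Disjoint A B := by
    rw [Finset.disjoint_left]
    intro p hp hq
    simp only [hAdef, hBdef, Finset.mem_filter] at hp hq
    tauto
  have hdisjAC : Disjoint A C := by
    rw [Finset.disjoint_left]
    intro p hp hq
    simp only [hAdef, hCdef, Finset.mem_filter] at hp hq
    tauto
  have hdisjBC : Disjoint B C := by
    rw [Finset.disjoint_left]
    intro p hp hq
    simp only [hBdef, hCdef, Finset.mem_filter] at hp hq
    tauto
  have h1 : kendall σ₁ πv = A.card + C.card := by
    rw [kendall, ← Finset.card_union_of_disjoint hdisjAC]
    congr 1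
    ext p
    simp only [hAdef, hCdef, Finset.mem_union, Finset.mem_filter, Finset.mem_univ, true_and]
    tauto
  have h2 : kendall π πv = B.card + C.card := by
    rw [kendall, ← Finset.card_union_of_disjoint hdisjBC]
    congr 1
    ext p
    simp only [hBdef, hCdef, Finset.mem_union, Finset.mem_filter, Finset.mem_univ, true_and]
    tauto
  have h3 : kendall σ₁ π = A.card + B.card := by
    rw [kendall, ← Finset.card_union_of_disjoint hdisjAB]
    congr 1
    ext p
    simp only [hAdef, hBdef, Finset.mem_union, Finset.mem_filter, Finset.mem_univ, true_and]
    tauto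
  have hAB : A.card = B.card := by omega
  refine ⟨by omega, ?_⟩
  exact ⟨A.card, by omega⟩
end

section
/- Suppose σ₁ is more popular than π in the simple sense, and the majority graph restricted to the voters abstaining between σ₁ and π is acyclic. Then there exists a ranking σ₂ such that strictly more than half of all voters prefer σ₂ to π; i.e., π is not absolutely popular. -/
section helpers
variable {m : ℕ}

lemma perm_not_lt (w : Ranking m) {a b : Fin m} (h : a ≠ b) :
    ¬ w a < w b ↔ w b < w a := by
  have h2 : (w a : ℕ) ≠ (w b : ℕ) := by
    intro hh
    exact h (w.injective (Fin.ext hh))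
  simp only [Fin.lt_def]
  omega

lemma swap_lt_iff {i j : Fin m} (hij : (i : ℕ) + 1 = (j : ℕ)) {u w : Fin m}
    (h1 : ¬(u = i ∧ w = j)) (h2 : ¬(u = j ∧ w = i)) :
    (Equiv.swap i j u < Equiv.swap i j w ↔ u < w) := by
  simp only [Equiv.swap_apply_def]
  split_ifs <;> simp only [Fin.lt_def, Fin.ext_iff, not_and] at * <;> omega

lemma kendall_eq_sum (ρ v : Ranking m) :
    kendall ρ v = ∑ p : Fin m × Fin m,
      (if p.1 < p.2 ∧ ¬ ((ρ p.1 < ρ p.2) ↔ (v p.1 < v p.2)) then 1 else 0) := by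
  rw [kendall, Finset.card_filter]

lemma kendall_parity (σ π v : Ranking m) :
    2 ∣ (kendall σ v + kendall π v + kendall σ π) := by
  rw [kendall_eq_sum σ v, kendall_eq_sum π v, kendall_eq_sum σ π,
    ← Finset.sum_add_distrib, ← Finset.sum_add_distrib]
  apply Finset.dvd_sum
  intro p _
  by_cases h12 : p.1 < p.2
  · by_cases hA : σ p.1 < σ p.2 <;> by_cases hB : v p.1 < v p.2 <;>
      by_cases hC : π p.1 < π p.2 <;> simp [h12, hA, hB, hC]
  · simp [h12]

lemma kendall_swap (σ v : Ranking m) {i j : Fin m} (hij : (i : ℕ) + 1 = (j : ℕ)) :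
    kendall (σ.trans (Equiv.swap i j)) v
      + (if v (σ.symm j) < v (σ.symm i) then 1 else 0)
    = kendall σ v + (if v (σ.symm i) < v (σ.symm j) then 1 else 0) := by
  have hijne : i ≠ j := by
    intro h
    rw [h] at hij
    omega
  set x := σ.symm i with hx
  set y := σ.symm j with hy
  have hσx : σ x = i := σ.apply_symm_apply i
  have hσy : σ y = j := σ.apply_symm_apply j
  have hxy : x ≠ y := by
    intro h
    exact hijne (by rw [← hσx, ← hσy, h])
  have hilj : i < j := by simp only [Fin.lt_def]; omega
  have hσ₂x : (σ.trans (Equiv.swap i j)) x = j := by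
    simp [Equiv.trans_apply, hσx, Equiv.swap_apply_left]
  have hσ₂y : (σ.trans (Equiv.swap i j)) y = i := by
    simp [Equiv.trans_apply, hσy, Equiv.swap_apply_right]
  set q₀ : Fin m × Fin m := if x < y then (x, y) else (y, x) with hq
  -- off q₀ the conditions agree
  have hoff : ∀ p : Fin m × Fin m, p ≠ q₀ →
      ((p.1 < p.2 ∧ ¬ (((σ.trans (Equiv.swap i j)) p.1 < (σ.trans (Equiv.swap i j)) p.2)
          ↔ (v p.1 < v p.2)))
        ↔ (p.1 < p.2 ∧ ¬ ((σ p.1 < σ p.2) ↔ (v p.1 < v p.2)))) := by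
    intro p hp
    by_cases h12 : p.1 < p.2
    · have hb1 : ¬ (σ p.1 = i ∧ σ p.2 = j) := by
        rintro ⟨f1, f2⟩
        have e1 : p.1 = x := by rw [hx, ← f1, Equiv.symm_apply_apply]
        have e2 : p.2 = y := by rw [hy, ← f2, Equiv.symm_apply_apply]
        have hpp : p = (x, y) := Prod.ext e1 e2
        rcases lt_or_gt_of_ne hxy with hlt | hlt
        · exact hp (by rw [hq, if_pos hlt, hpp])
        · rw [hpp] at h12; exact absurd h12 (asymm hlt)
      have hb2 : ¬ (σ p.1 = j ∧ σ p.2 = i) := by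
        rintro ⟨f1, f2⟩
        have e1 : p.1 = y := by rw [hy, ← f1, Equiv.symm_apply_apply]
        have e2 : p.2 = x := by rw [hx, ← f2, Equiv.symm_apply_apply]
        have hpp : p = (y, x) := Prod.ext e1 e2
        rcases lt_or_gt_of_ne hxy with hlt | hlt
        · rw [hpp] at h12; exact absurd h12 (asymm hlt)
        · exact hp (by rw [hq, if_neg (asymm hlt), hpp])
      have key : ((σ.trans (Equiv.swap i j)) p.1 < (σ.trans (Equiv.swap i j)) p.2)
          ↔ (σ p.1 < σ p.2) := by
        have hb1' : ¬ (σ p.1 = i ∧ σ p.2 = j) := hb1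
        simpa [Equiv.trans_apply] using
          swap_lt_iff hij (u := σ p.1) (w := σ p.2) hb1 hb2
      rw [key]
    · simp [h12]
  have hq1 : (q₀.1 < q₀.2 ∧ ¬ (((σ.trans (Equiv.swap i j)) q₀.1 < (σ.trans (Equiv.swap i j)) q₀.2)
      ↔ (v q₀.1 < v q₀.2))) ↔ v x < v y := by
    rcases lt_or_gt_of_ne hxy with hlt | hlt
    · rw [hq, if_pos hlt]
      simp only [hσ₂x, hσ₂y]
      have : ¬ (j < i) := asymm hilj
      constructor
      · rintro ⟨-, hn⟩
        by_contra hvy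
        exact hn (iff_of_false this hvy)
      · intro hv
        exact ⟨hlt, fun hiff => this (hiff.mpr hv)⟩
    · rw [hq, if_neg (asymm hlt)]
      simp only [hσ₂x, hσ₂y]
      constructor
      · rintro ⟨-, hn⟩
        by_contra hvy
        have hyx : v y < v x := by
          rcases lt_trichotomy (v x) (v y) with h | h | h
          · exact absurd h hvy
          · exact (hxy (v.injective h)).elim
          · exact h
        exact hn (iff_of_true hilj hyx)
      · intro hv
        refine ⟨hlt, fun hiff => ?_⟩
        have := hiff.mp hilj
        exact absurd hv (asymm this)
  have hq2 : (q₀.1 < q₀.2 ∧ ¬ ((σ q₀.1 < σ q₀.2) ↔ (v q₀.1 < v q₀.2))) ↔ v y < v x := by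
    rcases lt_or_gt_of_ne hxy with hlt | hlt
    · rw [hq, if_pos hlt]
      simp only [hσx, hσy]
      constructor
      · rintro ⟨-, hn⟩
        by_contra hvy
        have hxy' : v x < v y := by
          rcases lt_trichotomy (v x) (v y) with h | h | h
          · exact h
          · exact (hxy (v.injective h)).elim
          · exact absurd h hvy
        exact hn (iff_of_true hilj hxy')
      · intro hv
        refine ⟨hlt, fun hiff => ?_⟩
        exact absurd hv (asymm (hiff.mp hilj))
    · rw [hq, if_neg (asymm hlt)]
      simp only [hσx, hσy]
      have : ¬ (j < i) := asymm hilj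
      constructor
      · rintro ⟨-, hn⟩
        by_contra hvy
        exact hn (iff_of_false this hvy)
      · intro hv
        exact ⟨hlt, fun hiff => this (hiff.mpr hv)⟩
  rw [kendall_eq_sum, kendall_eq_sum,
    ← Finset.add_sum_erase _ _ (Finset.mem_univ q₀),
    ← Finset.add_sum_erase _ _ (Finset.mem_univ q₀)]
  have hS : (∑ p ∈ Finset.univ.erase q₀,
        (if p.1 < p.2 ∧ ¬ (((σ.trans (Equiv.swap i j)) p.1 < (σ.trans (Equiv.swap i j)) p.2)
          ↔ (v p.1 < v p.2)) then 1 else 0))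
      = ∑ p ∈ Finset.univ.erase q₀,
        (if p.1 < p.2 ∧ ¬ ((σ p.1 < σ p.2) ↔ (v p.1 < v p.2)) then 1 else 0) := by
    apply Finset.sum_congr rfl
    intro p hp
    have := hoff p (Finset.ne_of_mem_erase hp)
    simp only [this]
  rw [hS]
  simp only [hq1, hq2]
  rcases lt_trichotomy (v x) (v y) with h | h | h
  · simp [h, asymm h]
    omega
  · simp [h, lt_irrefl]
  · simp [h, asymm h]
    omega

lemma exists_adj_inversion (σ π : Ranking m) (hne : σ ≠ π) :
    ∃ i j : Fin m, (i : ℕ) + 1 = (j : ℕ) ∧ π (σ.symm j) < π (σ.symm i) := by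
  by_contra h
  push_neg at h
  apply hne
  have hstep : ∀ k l : Fin m, (k : ℕ) + 1 = (l : ℕ) → π (σ.symm k) < π (σ.symm l) := by
    intro k l hkl
    have h1 := h k l hkl
    have hklne : k ≠ l := by intro hh; rw [hh] at hkl; omega
    have : π (σ.symm k) ≠ π (σ.symm l) := by
      intro hh
      exact hklne (σ.symm.injective (π.injective hh))
    exact lt_of_le_of_ne h1 this
  have haux : ∀ (d : ℕ) (k l : Fin m), (l : ℕ) = (k : ℕ) + d + 1 →
      π (σ.symm k) < π (σ.symm l) := by
    intro d
    induction d with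
    | zero => intro k l hd; exact hstep k l (by omega)
    | succ d ih =>
      intro k l hd
      have hm : (k : ℕ) + d + 1 < m := by have := l.isLt; omega
      exact lt_trans (ih k ⟨(k : ℕ) + d + 1, hm⟩ (by simp))
        (hstep ⟨(k : ℕ) + d + 1, hm⟩ l (by simp; omega))
  have hsm : StrictMono (fun k : Fin m => π (σ.symm k)) := by
    intro k l hkl
    have hkl' : (k : ℕ) < (l : ℕ) := hkl
    exact haux ((l : ℕ) - (k : ℕ) - 1) k l (by omega)
  have hrange : Set.range (fun k : Fin m => π (σ.symm k)) = Set.range (id : Fin m → Fin m) := by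
    rw [Set.range_id]
    apply Set.eq_univ_of_forall
    intro c
    exact ⟨σ (π.symm c), by simp⟩
  haveI : WellFoundedLT (Fin m) := inferInstance
  have hid : (fun k : Fin m => π (σ.symm k)) = id :=
    (StrictMono.range_inj (f := fun k : Fin m => π (σ.symm k)) (g := id) hsm strictMono_id).mp hrange
  apply Equiv.ext
  intro c
  have := congrFun hid (σ c)
  simpa using this.symm

end helpers

theorem simply_beats_implies_absolutely_beaten {m n : ℕ}
    (prof : Fin n → Ranking m) (σ₁ π : Ranking m)
    (hpop : prefCount prof σ₁ π > prefCount prof π σ₁)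
    (habs_acyc : acyclicRel (fun a b : Fin m =>
      2 * (((Finset.univ.filter
              (fun v => kendall σ₁ (prof v) = kendall π (prof v)))).filter
            (fun v => prof v a < prof v b)).card >
        (Finset.univ.filter
          (fun v => kendall σ₁ (prof v) = kendall π (prof v))).card)) :
    ∃ σ₂ : Ranking m, 2 * prefCount prof σ₂ π > n := by
  
  classical
  have hne : σ₁ ≠ π := by
    rintro rfl
    exact lt_irrefl _ hpop
  by_cases hbig : 2 * prefCount prof σ₁ π > n
  · exact ⟨σ₁, hbig⟩
  push_neg at hbig
  set E : Finset (Fin n) :=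
    Finset.univ.filter (fun v => kendall σ₁ (prof v) = kendall π (prof v)) with hE
  set P : Finset (Fin n) :=
    Finset.univ.filter (fun v => kendall σ₁ (prof v) < kendall π (prof v)) with hP
  set Q : Finset (Fin n) :=
    Finset.univ.filter (fun v => kendall π (prof v) < kendall σ₁ (prof v)) with hQ
  have hpP : prefCount prof σ₁ π = P.card := rfl
  have hqQ : prefCount prof π σ₁ = Q.card := rfl
  have hsplitn : P.card + (Q.card + E.card) = n := by
    have h1 : P.card
        + (Finset.univ.filter (fun v => ¬ kendall σ₁ (prof v) < kendall π (prof v))).card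
        = n := by
      rw [hP, Finset.card_filter_add_card_filter_not, Finset.card_univ,
        Fintype.card_fin]
    have h2 : (Finset.univ.filter (fun v => ¬ kendall σ₁ (prof v) < kendall π (prof v))).filter
        (fun v => kendall π (prof v) < kendall σ₁ (prof v)) = Q := by
      rw [Finset.filter_filter, hQ]
      apply Finset.filter_congr
      intro v _
      constructor
      · rintro ⟨-, h⟩
        exact h
      · intro h
        exact ⟨by omega, h⟩
    have h3 : (Finset.univ.filter (fun v => ¬ kendall σ₁ (prof v) < kendall π (prof v))).filter
        (fun v => ¬ kendall π (prof v) < kendall σ₁ (prof v)) = E := by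
      rw [Finset.filter_filter, hE]
      apply Finset.filter_congr
      intro v _
      constructor
      · rintro ⟨h1', h2'⟩
        omega
      · intro h
        omega
    have h4 := Finset.card_filter_add_card_filter_not
      (s := Finset.univ.filter (fun v => ¬ kendall σ₁ (prof v) < kendall π (prof v)))
      (p := fun v => kendall π (prof v) < kendall σ₁ (prof v))
    rw [h2, h3] at h4
    omega
  have hPQ : Q.card < P.card := by
    rw [hpP, hqQ] at hpop
    exact hpop
  rw [hpP] at hbig
  obtain ⟨v₀, hv₀⟩ := Finset.card_pos.mp (show 0 < E.card by omega)
  have hv₀E : kendall σ₁ (prof v₀) = kendall π (prof v₀) := by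
    rw [hE, Finset.mem_filter] at hv₀
    exact hv₀.2
  have hpar : ∀ v : Fin n, kendall σ₁ (prof v) % 2 = kendall π (prof v) % 2 := by
    intro v
    have h1 := kendall_parity σ₁ π (prof v)
    have h2 := kendall_parity σ₁ π (prof v₀)
    omega
  by_cases hex : ∃ i j : Fin m, (i : ℕ) + 1 = (j : ℕ) ∧
      ¬ (2 * (E.filter (fun v => prof v (σ₁.symm i) < prof v (σ₁.symm j))).card > E.card)
  · obtain ⟨i, j, hij, hnr⟩ := hex
    push_neg at hnr
    have hijne : i ≠ j := by
      intro h
      rw [h] at hij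
      omega
    set x := σ₁.symm i with hx
    set y := σ₁.symm j with hy
    have hxy : x ≠ y := by
      intro h
      rw [hx, hy] at h
      exact hijne (σ₁.symm.injective h)
    refine ⟨σ₁.trans (Equiv.swap i j), ?_⟩
    have hswap : ∀ v : Fin n, kendall (σ₁.trans (Equiv.swap i j)) (prof v)
        + (if prof v y < prof v x then 1 else 0)
        = kendall σ₁ (prof v) + (if prof v x < prof v y then 1 else 0) :=
      fun v => kendall_swap σ₁ (prof v) hij
    have hsub : P ∪ E.filter (fun v => prof v y < prof v x)
        ⊆ Finset.univ.filter
          (fun v => kendall (σ₁.trans (Equiv.swap i j)) (prof v) < kendall π (prof v)) := by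
      intro v hv
      rw [Finset.mem_union] at hv
      rw [Finset.mem_filter]
      refine ⟨Finset.mem_univ v, ?_⟩
      have hs := hswap v
      rcases hv with hv | hv
      · rw [hP, Finset.mem_filter] at hv
        have hlt := hv.2
        have hp2 := hpar v
        rcases lt_trichotomy (prof v x) (prof v y) with h | h | h
        · rw [if_pos h, if_neg (asymm h)] at hs
          omega
        · exact ((hxy ((prof v).injective h))).elim
        · rw [if_neg (asymm h), if_pos h] at hs
          omega
      · rw [Finset.mem_filter] at hv
        obtain ⟨hvE, hyx⟩ := hv
        rw [hE, Finset.mem_filter] at hvE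
        have heq := hvE.2
        rw [if_pos hyx, if_neg (asymm hyx)] at hs
        omega
    have hdisj : Disjoint P (E.filter (fun v => prof v y < prof v x)) := by
      rw [Finset.disjoint_left]
      intro v hvP hvF
      rw [hP, Finset.mem_filter] at hvP
      rw [Finset.mem_filter] at hvF
      have hvE := hvF.1
      rw [hE, Finset.mem_filter] at hvE
      have h1 := hvP.2
      have h2 := hvE.2
      omega
    have hcard : P.card + (E.filter (fun v => prof v y < prof v x)).card
        ≤ prefCount prof (σ₁.trans (Equiv.swap i j)) π := by
      have h1 : prefCount prof (σ₁.trans (Equiv.swap i j)) π = (Finset.univ.filter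
          (fun v => kendall (σ₁.trans (Equiv.swap i j)) (prof v) < kendall π (prof v))).card :=
        rfl
      rw [h1, ← Finset.card_union_of_disjoint hdisj]
      exact Finset.card_le_card hsub
    have hEsplit : (E.filter (fun v => prof v x < prof v y)).card
        + (E.filter (fun v => prof v y < prof v x)).card = E.card := by
      have h4 := Finset.card_filter_add_card_filter_not
        (s := E) (p := fun v => prof v x < prof v y)
      have h5 : E.filter (fun v => ¬ prof v x < prof v y)
          = E.filter (fun v => prof v y < prof v x) :=
        Finset.filter_congr (fun v _ => perm_not_lt (prof v) hxy)
      rw [h5] at h4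
      exact h4
    omega
  · exfalso
    push_neg at hex
    obtain ⟨i0, j0, hij0, hinv0⟩ := exists_adj_inversion σ₁ π hne
    have hacyc : acyclicRel (fun a b : Fin m =>
        2 * (E.filter (fun v => prof v a < prof v b)).card > E.card) := habs_acyc
    have hchain : ∀ (d : ℕ) (k l : Fin m), (l : ℕ) = (k : ℕ) + d + 1 →
        Relation.TransGen (fun a b : Fin m =>
          2 * (E.filter (fun v => prof v a < prof v b)).card > E.card)
          (σ₁.symm k) (σ₁.symm l) := by
      intro d
      induction d with
      | zero =>
        intro k l h
        exact Relation.TransGen.single (hex k l (by omega))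
      | succ d ih =>
        intro k l h
        have hm : (k : ℕ) + d + 1 < m := by
          have := l.isLt
          omega
        refine Relation.TransGen.tail (ih k ⟨(k : ℕ) + d + 1, hm⟩ rfl)
          (hex ⟨(k : ℕ) + d + 1, hm⟩ l ?_)
        rw [show ((⟨(k : ℕ) + d + 1, hm⟩ : Fin m) : ℕ) = (k : ℕ) + d + 1 from rfl]
        omega
    have hb : ∀ c d : Fin m, σ₁ c < σ₁ d →
        ¬ (2 * (E.filter (fun v => prof v d < prof v c)).card > E.card) := by
      intro c d hcd hrdc
      have hcd' : (σ₁ c : ℕ) < (σ₁ d : ℕ) := hcd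
      have h2 := hchain ((σ₁ d : ℕ) - (σ₁ c : ℕ) - 1) (σ₁ c) (σ₁ d) (by omega)
      rw [Equiv.symm_apply_apply, Equiv.symm_apply_apply] at h2
      exact hacyc c (h2.trans (Relation.TransGen.single hrdc))
    have hEsplit2 : ∀ a b : Fin m, a ≠ b →
        (E.filter (fun v => prof v a < prof v b)).card
          + (E.filter (fun v => prof v b < prof v a)).card = E.card := by
      intro a b hab
      have h4 := Finset.card_filter_add_card_filter_not
        (s := E) (p := fun v => prof v a < prof v b)
      have h5 : E.filter (fun v => ¬ prof v a < prof v b)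
          = E.filter (fun v => prof v b < prof v a) :=
        Finset.filter_congr (fun v _ => perm_not_lt (prof v) hab)
      rw [h5] at h4
      exact h4
    set t1 : Fin m × Fin m → ℕ := fun p =>
      (E.filter (fun v => p.1 < p.2
        ∧ ¬ ((σ₁ p.1 < σ₁ p.2) ↔ (prof v p.1 < prof v p.2)))).card with ht1
    set t2 : Fin m × Fin m → ℕ := fun p =>
      (E.filter (fun v => p.1 < p.2
        ∧ ¬ ((π p.1 < π p.2) ↔ (prof v p.1 < prof v p.2)))).card with ht2
    have hsum1 : ∑ v ∈ E, kendall σ₁ (prof v) = ∑ p : Fin m × Fin m, t1 p := by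
      have h0 : ∀ v ∈ E, kendall σ₁ (prof v) = ∑ p : Fin m × Fin m,
          (if p.1 < p.2 ∧ ¬ ((σ₁ p.1 < σ₁ p.2) ↔ (prof v p.1 < prof v p.2))
            then 1 else 0) := fun v _ => kendall_eq_sum σ₁ (prof v)
      rw [Finset.sum_congr rfl h0, Finset.sum_comm]
      apply Finset.sum_congr rfl
      intro p _
      simp only [ht1]
      rw [Finset.card_filter]
    have hsum2 : ∑ v ∈ E, kendall π (prof v) = ∑ p : Fin m × Fin m, t2 p := by
      have h0 : ∀ v ∈ E, kendall π (prof v) = ∑ p : Fin m × Fin m,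
          (if p.1 < p.2 ∧ ¬ ((π p.1 < π p.2) ↔ (prof v p.1 < prof v p.2))
            then 1 else 0) := fun v _ => kendall_eq_sum π (prof v)
      rw [Finset.sum_congr rfl h0, Finset.sum_comm]
      apply Finset.sum_congr rfl
      intro p _
      simp only [ht2]
      rw [Finset.card_filter]
    have hEeq : ∑ v ∈ E, kendall σ₁ (prof v) = ∑ v ∈ E, kendall π (prof v) := by
      apply Finset.sum_congr rfl
      intro v hv
      rw [hE, Finset.mem_filter] at hv
      exact hv.2
    have hle : ∀ p : Fin m × Fin m, t1 p ≤ t2 p := by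
      intro p
      simp only [ht1, ht2]
      by_cases h12 : p.1 < p.2
      · have hne12 : p.1 ≠ p.2 := ne_of_lt h12
        by_cases hA : σ₁ p.1 < σ₁ p.2
        · by_cases hC : π p.1 < π p.2
          · apply le_of_eq
            congr 1
            apply Finset.filter_congr
            intro v _
            simp [h12, hA, hC]
          · have e1 : E.filter (fun v => p.1 < p.2
                ∧ ¬ ((σ₁ p.1 < σ₁ p.2) ↔ (prof v p.1 < prof v p.2)))
                = E.filter (fun v => prof v p.2 < prof v p.1) := by
              apply Finset.filter_congr
              intro v _
              constructor
              · rintro ⟨-, hn⟩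
                exact (perm_not_lt (prof v) hne12).mp (fun hB => hn (iff_of_true hA hB))
              · intro hvb
                exact ⟨h12, fun hiff => absurd (hiff.mp hA) (asymm hvb)⟩
            have e2 : E.filter (fun v => p.1 < p.2
                ∧ ¬ ((π p.1 < π p.2) ↔ (prof v p.1 < prof v p.2)))
                = E.filter (fun v => prof v p.1 < prof v p.2) := by
              apply Finset.filter_congr
              intro v _
              constructor
              · rintro ⟨-, hn⟩
                by_contra hB
                exact hn (iff_of_false hC hB)
              · intro hvb
                exact ⟨h12, fun hiff => absurd (hiff.mpr hvb) hC⟩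
            rw [e1, e2]
            have hnr2 := hb p.1 p.2 hA
            have hsp := hEsplit2 p.1 p.2 hne12
            omega
        · have hA' : σ₁ p.2 < σ₁ p.1 := (perm_not_lt σ₁ hne12).mp hA
          by_cases hC : π p.1 < π p.2
          · have e1 : E.filter (fun v => p.1 < p.2
                ∧ ¬ ((σ₁ p.1 < σ₁ p.2) ↔ (prof v p.1 < prof v p.2)))
                = E.filter (fun v => prof v p.1 < prof v p.2) := by
              apply Finset.filter_congr
              intro v _
              constructor
              · rintro ⟨-, hn⟩
                by_contra hB
                exact hn (iff_of_false hA hB)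
              · intro hvb
                exact ⟨h12, fun hiff => absurd (hiff.mpr hvb) hA⟩
            have e2 : E.filter (fun v => p.1 < p.2
                ∧ ¬ ((π p.1 < π p.2) ↔ (prof v p.1 < prof v p.2)))
                = E.filter (fun v => prof v p.2 < prof v p.1) := by
              apply Finset.filter_congr
              intro v _
              constructor
              · rintro ⟨-, hn⟩
                exact (perm_not_lt (prof v) hne12).mp (fun hB => hn (iff_of_true hC hB))
              · intro hvb
                exact ⟨h12, fun hiff => absurd (hiff.mp hC) (asymm hvb)⟩
            rw [e1, e2]
            have hnr2 := hb p.2 p.1 hA'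
            have hsp := hEsplit2 p.1 p.2 hne12
            omega
          · apply le_of_eq
            congr 1
            apply Finset.filter_congr
            intro v _
            constructor
            · rintro ⟨-, hn⟩
              refine ⟨h12, fun hiff => ?_⟩
              by_cases hB : prof v p.1 < prof v p.2
              · exact hC (hiff.mpr hB)
              · exact hn (iff_of_false hA hB)
            · rintro ⟨-, hn⟩
              refine ⟨h12, fun hiff => ?_⟩
              by_cases hB : prof v p.1 < prof v p.2
              · exact hA (hiff.mpr hB)
              · exact hn (iff_of_false hC hB)
      · apply le_of_eq
        congr 1
        apply Finset.filter_congr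
        intro v _
        simp [h12]
    set x0 := σ₁.symm i0 with hx0
    set y0 := σ₁.symm j0 with hy0
    have hxy0 : x0 ≠ y0 := by
      intro h
      rw [hx0, hy0] at h
      have := σ₁.symm.injective h
      rw [this] at hij0
      omega
    have hA0 : σ₁ x0 < σ₁ y0 := by
      rw [hx0, hy0, Equiv.apply_symm_apply, Equiv.apply_symm_apply]
      exact Fin.lt_def.mpr (by omega)
    have hC0 : π y0 < π x0 := hinv0
    have hr0 := hex i0 j0 hij0
    rw [← hx0, ← hy0] at hr0
    have hsplit0 := hEsplit2 x0 y0 hxy0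
    have hstrict : ∃ p : Fin m × Fin m, t1 p < t2 p := by
      rcases lt_or_gt_of_ne hxy0 with hlt | hlt
      · refine ⟨(x0, y0), ?_⟩
        simp only [ht1, ht2]
        have e1 : E.filter (fun v => (x0, y0).1 < (x0, y0).2
            ∧ ¬ ((σ₁ (x0, y0).1 < σ₁ (x0, y0).2) ↔ (prof v (x0, y0).1 < prof v (x0, y0).2)))
            = E.filter (fun v => prof v y0 < prof v x0) := by
          apply Finset.filter_congr
          intro v _
          constructor
          · rintro ⟨-, hn⟩
            exact (perm_not_lt (prof v) hxy0).mp (fun hB => hn (iff_of_true hA0 hB))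
          · intro hvb
            exact ⟨hlt, fun hiff => absurd (hiff.mp hA0) (asymm hvb)⟩
        have e2 : E.filter (fun v => (x0, y0).1 < (x0, y0).2
            ∧ ¬ ((π (x0, y0).1 < π (x0, y0).2) ↔ (prof v (x0, y0).1 < prof v (x0, y0).2)))
            = E.filter (fun v => prof v x0 < prof v y0) := by
          apply Finset.filter_congr
          intro v _
          constructor
          · rintro ⟨-, hn⟩
            by_contra hB
            exact hn (iff_of_false (asymm hC0) hB)
          · intro hvb
            exact ⟨hlt, fun hiff => absurd (hiff.mpr hvb) (asymm hC0)⟩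
        rw [e1, e2]
        omega
      · refine ⟨(y0, x0), ?_⟩
        simp only [ht1, ht2]
        have e1 : E.filter (fun v => (y0, x0).1 < (y0, x0).2
            ∧ ¬ ((σ₁ (y0, x0).1 < σ₁ (y0, x0).2) ↔ (prof v (y0, x0).1 < prof v (y0, x0).2)))
            = E.filter (fun v => prof v y0 < prof v x0) := by
          apply Finset.filter_congr
          intro v _
          constructor
          · rintro ⟨-, hn⟩
            by_contra hB
            exact hn (iff_of_false (asymm hA0) hB)
          · intro hvb
            exact ⟨hlt, fun hiff => absurd (hiff.mpr hvb) (asymm hA0)⟩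
        have e2 : E.filter (fun v => (y0, x0).1 < (y0, x0).2
            ∧ ¬ ((π (y0, x0).1 < π (y0, x0).2) ↔ (prof v (y0, x0).1 < prof v (y0, x0).2)))
            = E.filter (fun v => prof v x0 < prof v y0) := by
          apply Finset.filter_congr
          intro v _
          constructor
          · rintro ⟨-, hn⟩
            exact (perm_not_lt (prof v) (Ne.symm hxy0)).mp
              (fun hB => hn (iff_of_true hC0 hB))
          · intro hvb
            exact ⟨hlt, fun hiff => absurd (hiff.mp hC0) (asymm hvb)⟩
        rw [e1, e2]
        omega
    obtain ⟨pstar, hps⟩ := hstrict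
    have hlt2 : ∑ p : Fin m × Fin m, t1 p < ∑ p : Fin m × Fin m, t2 p :=
      Finset.sum_lt_sum (fun p _ => hle p) ⟨pstar, Finset.mem_univ pstar, hps⟩
    omega
end

section
/- If σ₁ is more popular than π in the simple sense and the voters abstaining between σ₁ and π have an acyclic majority graph and σ₁ ≠ π, then there exist two candidates a*, b* consecutive in σ₁ (a* immediately before b*) such that at least half of the abstaining voters prefer b* to a*. -/
section Aux
variable {m n : ℕ}

/-- Count of voters in `A` ranking `a` before `b`. -/
def cntA (prof : Fin n → Ranking m) (A : Finset (Fin n)) (a b : Fin m) : ℕ :=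
  (A.filter fun v => prof v a < prof v b).card

/-- Count of voters in `A` disagreeing with `ρ` on the pair `p`. -/
def fcard (prof : Fin n → Ranking m) (A : Finset (Fin n)) (ρ : Ranking m)
    (p : Fin m × Fin m) : ℕ :=
  (A.filter fun v => p.1 < p.2 ∧ ¬ ((ρ p.1 < ρ p.2) ↔ (prof v p.1 < prof v p.2))).card

lemma cntA_partition (prof : Fin n → Ranking m) (A : Finset (Fin n)) {a b : Fin m}
    (hab : a ≠ b) : cntA prof A a b + cntA prof A b a = A.card := by
  unfold cntA
  have h1 : (A.filter fun v => prof v b < prof v a)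
      = (A.filter fun v => ¬ (prof v a < prof v b)) := by
    apply Finset.filter_congr
    intro v _
    have hne' : prof v a ≠ prof v b := fun h => hab ((prof v).injective h)
    constructor
    · exact fun h => asymm h
    · exact fun h => lt_of_le_of_ne (not_lt.mp h) hne'.symm
  rw [h1]
  exact Finset.card_filter_add_card_filter_not _

lemma fcard_zero (prof : Fin n → Ranking m) (A : Finset (Fin n)) (ρ : Ranking m)
    {p : Fin m × Fin m} (h12 : ¬ p.1 < p.2) : fcard prof A ρ p = 0 := by
  simp [fcard, h12]

lemma fcard_eq (prof : Fin n → Ranking m) (A : Finset (Fin n)) (ρ : Ranking m)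
    {p : Fin m × Fin m} (h12 : p.1 < p.2) :
    fcard prof A ρ p
      = if ρ p.1 < ρ p.2 then cntA prof A p.2 p.1 else cntA prof A p.1 p.2 := by
  unfold fcard cntA
  have hne : p.1 ≠ p.2 := ne_of_lt h12
  by_cases hs : ρ p.1 < ρ p.2
  · rw [if_pos hs]
    congr 1
    apply Finset.filter_congr
    intro v _
    have hvne : prof v p.1 ≠ prof v p.2 := fun h => hne ((prof v).injective h)
    constructor
    · rintro ⟨-, hd⟩
      have : ¬ (prof v p.1 < prof v p.2) := fun hw => hd (iff_of_true hs hw)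
      exact lt_of_le_of_ne (not_lt.mp this) hvne.symm
    · intro hlt
      exact ⟨h12, fun hiff => asymm hlt (hiff.mp hs)⟩
  · rw [if_neg hs]
    congr 1
    apply Finset.filter_congr
    intro v _
    constructor
    · rintro ⟨-, hd⟩
      by_contra hw
      exact hd (iff_of_false hs hw)
    · intro hlt
      exact ⟨h12, fun hiff => hs (hiff.mpr hlt)⟩

lemma sum_kendall (prof : Fin n → Ranking m) (A : Finset (Fin n)) (ρ : Ranking m) :
    ∑ v ∈ A, kendall ρ (prof v)
      = ∑ p ∈ (Finset.univ : Finset (Fin m × Fin m)), fcard prof A ρ p := by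
  unfold kendall fcard
  simp_rw [Finset.card_filter]
  rw [Finset.sum_comm]

lemma le_of_mono (g : Fin m → Fin m)
    (hg : ∀ i j : Fin m, (i : ℕ) < (j : ℕ) → g i < g j) :
    ∀ i : Fin m, (i : ℕ) ≤ (g i : ℕ) := by
  suffices H : ∀ k : ℕ, ∀ i : Fin m, (i : ℕ) = k → k ≤ (g i : ℕ) from fun i => H _ i rfl
  intro k
  induction k with
  | zero => intro i _; exact Nat.zero_le _
  | succ k ih =>
    intro i hi
    have hk : k < m := by have := i.isLt; omega
    have h1 := ih ⟨k, hk⟩ rfl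
    have h2 : g ⟨k, hk⟩ < g i := hg _ _ (by simp [hi])
    have h3 : (g ⟨k, hk⟩ : ℕ) < (g i : ℕ) := h2
    omega

lemma perm_eq_of_adj (σ π : Ranking m)
    (h : ∀ a b : Fin m, (σ a : ℕ) + 1 = (σ b : ℕ) → π a ≤ π b) : σ = π := by
  have hadj : ∀ (i : ℕ) (hi1 : i < m) (hi : i + 1 < m),
      π (σ.symm ⟨i, hi1⟩) < π (σ.symm ⟨i + 1, hi⟩) := by
    intro i hi1 hi
    have h1 : (σ (σ.symm ⟨i, hi1⟩) : ℕ) + 1 = (σ (σ.symm ⟨i + 1, hi⟩) : ℕ) := by simp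
    have hne : σ.symm ⟨i, hi1⟩ ≠ σ.symm ⟨i + 1, hi⟩ := by
      intro he; rw [he] at h1; omega
    exact lt_of_le_of_ne (h _ _ h1) (fun he => hne (π.injective he))
  have hmono : ∀ k : ℕ, ∀ i j : Fin m, (j : ℕ) = (i : ℕ) + k + 1 →
      π (σ.symm i) < π (σ.symm j) := by
    intro k
    induction k with
    | zero =>
      intro i j hj
      have hi : (i : ℕ) + 1 < m := by have := j.isLt; omega
      have hj' : j = ⟨(i : ℕ) + 1, hi⟩ := Fin.ext (by simp only [Fin.val_mk]; omega)
      have := hadj (i : ℕ) i.isLt hi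
      rw [hj']
      simpa using this
    | succ k ih =>
      intro i j hj
      have hi : (i : ℕ) + 1 < m := by have := j.isLt; omega
      exact lt_trans (hadj (i : ℕ) i.isLt hi) (ih ⟨(i : ℕ) + 1, hi⟩ j (by simp only [Fin.val_mk]; omega))
  set g : Fin m → Fin m := fun i => π (σ.symm i) with hgdef
  have gmono : ∀ i j : Fin m, (i : ℕ) < (j : ℕ) → g i < g j := by
    intro i j hij
    exact hmono ((j : ℕ) - (i : ℕ) - 1) i j (by omega)
  set gi : Fin m → Fin m := fun i => σ (π.symm i) with hgidef
  have hgg : ∀ i, g (gi i) = i := by intro i; simp [hgdef, hgidef]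
  have hgig : ∀ i, gi (g i) = i := by intro i; simp [hgdef, hgidef]
  have gimono : ∀ i j : Fin m, (i : ℕ) < (j : ℕ) → gi i < gi j := by
    intro i j hij
    rcases lt_trichotomy (gi i) (gi j) with h' | h' | h'
    · exact h'
    · exfalso; have := congrArg g h'; rw [hgg, hgg] at this; omega
    · exfalso
      have := gmono _ _ h'
      rw [hgg, hgg] at this
      exact absurd this (by omega)
  have hup := le_of_mono g gmono
  have hup' := le_of_mono gi gimono
  have geq : ∀ i : Fin m, g i = i := by
    intro i
    have h1 := hup i
    have h2 := hup' (g i)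
    rw [hgig] at h2
    exact Fin.ext (by omega)
  apply Equiv.ext
  intro x
  have := geq (σ x)
  simp [hgdef] at this
  exact this.symm

lemma fcard_eq' (prof : Fin n → Ranking m) (A : Finset (Fin n)) (ρ : Ranking m)
    {a b : Fin m} (h12 : a < b) :
    fcard prof A ρ (a, b)
      = if ρ a < ρ b then cntA prof A b a else cntA prof A a b :=
  fcard_eq prof A ρ (p := (a, b)) h12

end Aux

theorem exists_consecutive_pair {m n : ℕ}
    (prof : Fin n → Ranking m) (σ₁ π : Ranking m) (hne : σ₁ ≠ π)
    (htop : topSorted prof π)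
    (hpop : prefCount prof σ₁ π > prefCount prof π σ₁)
    (habs_acyc : acyclicRel (fun a b : Fin m =>
      2 * (((Finset.univ.filter
              (fun v => kendall σ₁ (prof v) = kendall π (prof v)))).filter
            (fun v => prof v a < prof v b)).card >
        (Finset.univ.filter
          (fun v => kendall σ₁ (prof v) = kendall π (prof v))).card)) :
    ∃ a b : Fin m, (σ₁ a : ℕ) + 1 = (σ₁ b : ℕ) ∧
      2 * (((Finset.univ.filter
              (fun v => kendall σ₁ (prof v) = kendall π (prof v)))).filter
            (fun v => prof v b < prof v a)).card ≥
        (Finset.univ.filter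
          (fun v => kendall σ₁ (prof v) = kendall π (prof v))).card := by
  by_contra hcon
  push_neg at hcon
  set A : Finset (Fin n) :=
    Finset.univ.filter (fun v => kendall σ₁ (prof v) = kendall π (prof v)) with hA
  have hcon' : ∀ a b : Fin m, (σ₁ a : ℕ) + 1 = (σ₁ b : ℕ) →
      2 * cntA prof A b a < A.card := fun a b h => hcon a b h
  have radj : ∀ a b : Fin m, (σ₁ a : ℕ) + 1 = (σ₁ b : ℕ) →
      2 * cntA prof A a b > A.card := by
    intro a b h
    have hab : a ≠ b := by intro he; rw [he] at h; omega
    have h1 := hcon' a b h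
    have h2 := cntA_partition prof A hab
    omega
  have chain : ∀ k : ℕ, ∀ a b : Fin m, (σ₁ b : ℕ) = (σ₁ a : ℕ) + k + 1 →
      Relation.TransGen (fun a b : Fin m => 2 * cntA prof A a b > A.card) a b := by
    intro k
    induction k with
    | zero => exact fun a b h => Relation.TransGen.single (radj a b (by omega))
    | succ k ih =>
      intro a b h
      have hlt : (σ₁ a : ℕ) + 1 < m := by have := (σ₁ b).isLt; omega
      have hsc : (σ₁ (σ₁.symm ⟨(σ₁ a : ℕ) + 1, hlt⟩) : ℕ) = (σ₁ a : ℕ) + 1 := by simp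
      exact Relation.TransGen.head (radj a _ hsc.symm) (ih _ b (by omega))
  have hacyc : acyclicRel (fun a b : Fin m => 2 * cntA prof A a b > A.card) := habs_acyc
  have noback : ∀ a b : Fin m, (σ₁ a : ℕ) < (σ₁ b : ℕ) →
      cntA prof A b a ≤ cntA prof A a b := by
    intro a b h
    have hab : a ≠ b := by intro he; rw [he] at h; omega
    by_contra hgt
    push_neg at hgt
    have h2 := cntA_partition prof A hab
    have hr : 2 * cntA prof A b a > A.card := by omega
    exact hacyc b (Relation.TransGen.head hr
      (chain ((σ₁ b : ℕ) - (σ₁ a : ℕ) - 1) a b (by omega)))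
  have hsums : ∑ p ∈ (Finset.univ : Finset (Fin m × Fin m)), fcard prof A σ₁ p
      = ∑ p ∈ (Finset.univ : Finset (Fin m × Fin m)), fcard prof A π p := by
    rw [← sum_kendall, ← sum_kendall]
    refine Finset.sum_congr rfl (fun v hv => ?_)
    rw [hA] at hv
    exact (Finset.mem_filter.mp hv).2
  have hle : ∀ p ∈ (Finset.univ : Finset (Fin m × Fin m)),
      fcard prof A σ₁ p ≤ fcard prof A π p := by
    intro p _
    by_cases h12 : p.1 < p.2
    · rw [fcard_eq prof A σ₁ h12, fcard_eq prof A π h12]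
      have hne12 : p.1 ≠ p.2 := ne_of_lt h12
      have hσne : σ₁ p.1 ≠ σ₁ p.2 := fun he => hne12 (σ₁.injective he)
      by_cases hs : σ₁ p.1 < σ₁ p.2
      · rw [if_pos hs]
        by_cases ht : π p.1 < π p.2
        · rw [if_pos ht]
        · rw [if_neg ht]
          exact noback p.1 p.2 (Fin.lt_def.mp hs)
      · rw [if_neg hs]
        by_cases ht : π p.1 < π p.2
        · rw [if_pos ht]
          have hlt : σ₁ p.2 < σ₁ p.1 := lt_of_le_of_ne (not_lt.mp hs) hσne.symm
          exact noback p.2 p.1 (Fin.lt_def.mp hlt)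
        · rw [if_neg ht]
    · rw [fcard_zero prof A σ₁ h12, fcard_zero prof A π h12]
  have hpt := (Finset.sum_eq_sum_iff_of_le hle).mp hsums
  have hadjpair : ∃ a b : Fin m, (σ₁ a : ℕ) + 1 = (σ₁ b : ℕ) ∧ π b < π a := by
    by_contra hno
    push_neg at hno
    exact hne (perm_eq_of_adj σ₁ π hno)
  obtain ⟨a, b, hab1, hπ⟩ := hadjpair
  have hab : a ≠ b := by intro he; rw [he] at hab1; omega
  have hσ : σ₁ a < σ₁ b := by rw [Fin.lt_def]; omega
  have hπ' : ¬ π a < π b := asymm hπ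
  have key : cntA prof A b a = cntA prof A a b := by
    rcases lt_or_gt_of_ne hab with h' | h'
    · have hh := hpt (a, b) (Finset.mem_univ _)
      rw [fcard_eq' prof A σ₁ h', fcard_eq' prof A π h', if_pos hσ, if_neg hπ'] at hh
      exact hh
    · have hh := hpt (b, a) (Finset.mem_univ _)
      rw [fcard_eq' prof A σ₁ h', fcard_eq' prof A π h', if_neg (asymm hσ), if_pos hπ] at hh
      exact hh
  have h2 := cntA_partition prof A hab
  have h3 := hcon' a b hab1
  omega
end

section
/- In every voting instance with at most 5 voters, a ranking is absolutely popular if and only if it is simply popular. -/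
namespace PopProof

open Finset

variable {m : ℕ}

/-- Integer indicator of disagreement on a (sorted) pair. -/
def indZ (α β : Ranking m) (p : Fin m × Fin m) : ℤ :=
  if p.1 < p.2 ∧ ¬ ((α p.1 < α p.2) ↔ (β p.1 < β p.2)) then 1 else 0

lemma kendall_intCast (α β : Ranking m) :
    (kendall α β : ℤ) = ∑ p : Fin m × Fin m, indZ α β p := by
  unfold kendall indZ
  rw [Finset.card_filter]
  push_cast
  rfl

lemma kendall_self (σ : Ranking m) : kendall σ σ = 0 := by
  simp [kendall]

lemma kendall_comm (α β : Ranking m) : kendall α β = kendall β α := by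
  unfold kendall
  congr 1
  apply Finset.filter_congr
  intro p _
  constructor <;> exact fun h => ⟨h.1, fun hiff => h.2 hiff.symm⟩

lemma kendall_sub (α β ρ : Ranking m) :
    (kendall α ρ : ℤ) - kendall β ρ = ∑ p : Fin m × Fin m,
      (2 * indZ α ρ p - 1) * indZ α β p := by
  rw [kendall_intCast, kendall_intCast, ← Finset.sum_sub_distrib]
  apply Finset.sum_congr rfl
  intro p _
  unfold indZ
  by_cases h0 : p.1 < p.2
  · by_cases ha : α p.1 < α p.2 <;> by_cases hb : β p.1 < β p.2 <;>
      by_cases hr : ρ p.1 < ρ p.2 <;>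
      simp [h0, ha, hb, hr]
  · simp [h0]

lemma even_tri (α β γ : Ranking m) :
    Even (kendall α β + kendall β γ + kendall α γ) := by
  unfold kendall
  rw [Finset.card_filter, Finset.card_filter, Finset.card_filter,
    ← Finset.sum_add_distrib, ← Finset.sum_add_distrib]
  apply Finset.even_sum
  intro p _
  by_cases h0 : p.1 < p.2
  · by_cases ha : α p.1 < α p.2 <;> by_cases hb : β p.1 < β p.2 <;>
      by_cases hc : γ p.1 < γ p.2 <;>
      simp [h0, ha, hb, hc]
  · simp [h0]



lemma fvne {u v : Fin m} (h : u ≠ v) : (u : ℕ) ≠ (v : ℕ) := Fin.val_ne_of_ne h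

lemma swap_preserve {i j : Fin m} (hij : (i : ℕ) + 1 = (j : ℕ)) (a b : Fin m)
    (h1 : ¬ (a = i ∧ b = j)) (h2 : ¬ (a = j ∧ b = i)) :
    (Equiv.swap i j a < Equiv.swap i j b ↔ a < b) := by
  have hji : i ≠ j := by intro h; subst h; omega
  by_cases hai : a = i
  · subst hai
    by_cases hbj : b = j
    · exact absurd ⟨rfl, hbj⟩ h1
    · by_cases hbi : b = a
      · subst hbi; simp
      · rw [Equiv.swap_apply_left, Equiv.swap_apply_of_ne_of_ne hbi hbj]
        have h3 := fvne hbi; have h4 := fvne hbj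
        simp only [Fin.lt_def]; omega
  · by_cases haj : a = j
    · subst haj
      by_cases hbi : b = i
      · exact absurd ⟨rfl, hbi⟩ h2
      · by_cases hbj : b = a
        · subst hbj; simp
        · rw [Equiv.swap_apply_right, Equiv.swap_apply_of_ne_of_ne hbi hbj]
          have h3 := fvne hbi; have h4 := fvne hbj
          simp only [Fin.lt_def]; omega
    · rw [Equiv.swap_apply_of_ne_of_ne hai haj]
      by_cases hbi : b = i
      · subst hbi
        rw [Equiv.swap_apply_left]
        have h3 := fvne hai; have h4 := fvne haj
        simp only [Fin.lt_def]; omega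
      · by_cases hbj : b = j
        · subst hbj
          rw [Equiv.swap_apply_right]
          have h3 := fvne hai; have h4 := fvne haj
          simp only [Fin.lt_def]; omega
        · rw [Equiv.swap_apply_of_ne_of_ne hbi hbj]

/-- Swapping two candidates before ranking = swapping their positions after. -/
lemma swap_conj (π : Ranking m) (x y : Fin m) :
    (Equiv.swap x y).trans π = π.trans (Equiv.swap (π x) (π y)) := by
  apply Equiv.ext
  intro c
  simp only [Equiv.trans_apply]
  by_cases hcx : c = x
  · subst hcx; rw [Equiv.swap_apply_left, Equiv.swap_apply_left]
  · by_cases hcy : c = y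
    · subst hcy; rw [Equiv.swap_apply_right, Equiv.swap_apply_right]
    · rw [Equiv.swap_apply_of_ne_of_ne hcx hcy,
        Equiv.swap_apply_of_ne_of_ne (fun h => hcx (π.injective h))
          (fun h => hcy (π.injective h))]

lemma adj_kendall (σ ρ : Ranking m) (i j : Fin m) (hij : (i : ℕ) + 1 = (j : ℕ)) :
    (kendall (σ.trans (Equiv.swap i j)) ρ : ℤ) =
      (kendall σ ρ : ℤ) + (if ρ (σ.symm j) < ρ (σ.symm i) then -1 else 1) := by
  set x := σ.symm i with hx
  set y := σ.symm j with hy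
  set τ := σ.trans (Equiv.swap i j) with hτ
  have hσx : σ x = i := σ.apply_symm_apply i
  have hσy : σ y = j := σ.apply_symm_apply j
  have hxy : x ≠ y := by
    intro h
    have : σ x = σ y := by rw [h]
    rw [hσx, hσy] at this
    exact (by omega : (i:ℕ) ≠ j) (by rw [this])
  have hτx : τ x = j := by
    simp only [hτ, Equiv.trans_apply, hσx, Equiv.swap_apply_left]
  have hτy : τ y = i := by
    simp only [hτ, Equiv.trans_apply, hσy, Equiv.swap_apply_right]
  set q : Fin m × Fin m := if x < y then (x, y) else (y, x) with hq
  have key : ∀ p : Fin m × Fin m, p ≠ q → indZ τ ρ p = indZ σ ρ p := by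
    intro p hp
    unfold indZ
    by_cases h0 : p.1 < p.2
    · have hiff : (τ p.1 < τ p.2 ↔ σ p.1 < σ p.2) := by
        simp only [hτ, Equiv.trans_apply]
        apply swap_preserve hij
        · rintro ⟨hh1, hh2⟩
          have hp1 : p.1 = x := by rw [hx, ← hh1, Equiv.symm_apply_apply]
          have hp2 : p.2 = y := by rw [hy, ← hh2, Equiv.symm_apply_apply]
          apply hp
          rw [hq, if_pos (by rw [← hp1, ← hp2]; exact h0)]
          exact Prod.ext hp1 hp2
        · rintro ⟨hh1, hh2⟩
          have hp1 : p.1 = y := by rw [hy, ← hh1, Equiv.symm_apply_apply]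
          have hp2 : p.2 = x := by rw [hx, ← hh2, Equiv.symm_apply_apply]
          apply hp
          rw [hq, if_neg (by rw [← hp1, ← hp2]; exact fun h => absurd (h.trans h0) (lt_irrefl _))]
          exact Prod.ext hp1 hp2
      exact if_congr (and_congr_right fun _ => not_congr (iff_congr hiff Iff.rfl)) rfl rfl
    · rw [if_neg (fun h => h0 h.1), if_neg (fun h => h0 h.1)]
  have hsum : (kendall τ ρ : ℤ) - (kendall σ ρ : ℤ) =
      indZ τ ρ q - indZ σ ρ q := by
    rw [kendall_intCast, kendall_intCast, ← Finset.sum_sub_distrib]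
    rw [Finset.sum_eq_single_of_mem q (Finset.mem_univ q)]
    intro p _ hp
    rw [key p hp, sub_self]
  have hρxy : ρ x ≠ ρ y := fun h => hxy (ρ.injective h)
  have hij' : i < j := by simp only [Fin.lt_def]; omega
  have hji' : ¬ (j < i) := by simp only [Fin.lt_def]; omega
  by_cases hxy' : x < y
  · have hq' : q = (x, y) := by rw [hq, if_pos hxy']
    by_cases hr : ρ y < ρ x
    · have hxr : ¬ ρ x < ρ y := lt_asymm hr
      have i1 : indZ σ ρ q = 1 := by
        simp [indZ, hq', hσx, hσy, hxy', hij', hxr]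
      have i2 : indZ τ ρ q = 0 := by
        simp [indZ, hq', hτx, hτy, hxy', hji', hxr]
      rw [if_pos hr]; omega
    · have hxr : ρ x < ρ y := lt_of_le_of_ne (not_lt.mp hr) hρxy
      have i1 : indZ σ ρ q = 0 := by
        simp [indZ, hq', hσx, hσy, hxy', hij', hxr]
      have i2 : indZ τ ρ q = 1 := by
        simp [indZ, hq', hτx, hτy, hxy', hji', hxr]
      rw [if_neg hr]; omega
  · have hyx : y < x := lt_of_le_of_ne (not_lt.mp hxy') (Ne.symm hxy)
    have hq' : q = (y, x) := by rw [hq, if_neg hxy']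
    by_cases hr : ρ y < ρ x
    · have i1 : indZ σ ρ q = 1 := by
        simp [indZ, hq', hσx, hσy, hyx, hji', hr]
      have i2 : indZ τ ρ q = 0 := by
        simp [indZ, hq', hτx, hτy, hyx, hij', hr]
      rw [if_pos hr]; omega
    · have i1 : indZ σ ρ q = 0 := by
        simp [indZ, hq', hσx, hσy, hyx, hji', hr]
      have i2 : indZ τ ρ q = 1 := by
        simp [indZ, hq', hτx, hτy, hyx, hij', hr]
      rw [if_neg hr]; omega

lemma adj_le (σ ρ : Ranking m) (i j : Fin m) (hij : (i : ℕ) + 1 = (j : ℕ)) :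
    kendall (σ.trans (Equiv.swap i j)) ρ ≤ kendall σ ρ + 1 := by
  have h := adj_kendall σ ρ i j hij
  split at h <;> omega

lemma adj_lt (σ ρ : Ranking m) (i j : Fin m) (hij : (i : ℕ) + 1 = (j : ℕ))
    (h : ρ (σ.symm j) < ρ (σ.symm i)) :
    kendall (σ.trans (Equiv.swap i j)) ρ < kendall σ ρ := by
  have h' := adj_kendall σ ρ i j hij
  rw [if_pos h] at h'
  omega

lemma le_apply_of_strictMono (f : Fin m → Fin m) (hf : StrictMono f) :
    ∀ i : Fin m, (i : ℕ) ≤ (f i : ℕ) := by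
  have key : ∀ k : ℕ, ∀ i : Fin m, (i : ℕ) = k → k ≤ (f i : ℕ) := by
    intro k
    induction k with
    | zero => omega
    | succ k IH =>
      intro i hk
      have hkm : k < m := by have := i.isLt; omega
      have hlt : (⟨k, hkm⟩ : Fin m) < i := by simp [Fin.lt_def]; omega
      have h1 := IH ⟨k, hkm⟩ rfl
      have h2 := hf hlt
      simp only [Fin.lt_def] at h2
      omega
  exact fun i => key _ i rfl

lemma strictMono_perm_eq_one (f : Equiv.Perm (Fin m))
    (hf : StrictMono (f : Fin m → Fin m)) : f = 1 := by
  have hsymm : StrictMono (f.symm : Fin m → Fin m) := by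
    intro a b hab
    rcases lt_trichotomy (f.symm a) (f.symm b) with h | h | h
    · exact h
    · exact absurd (f.symm.injective h) (ne_of_lt hab)
    · have := hf h
      simp only [Equiv.apply_symm_apply] at this
      exact absurd hab (lt_asymm this)
  apply Equiv.ext
  intro c
  have h1 := le_apply_of_strictMono f hf c
  have h2 := le_apply_of_strictMono (f.symm : Fin m → Fin m) hsymm (f c)
  simp only [Equiv.symm_apply_apply] at h2
  simp only [Equiv.Perm.coe_one, id_eq]
  exact Fin.ext (by omega)

lemma exists_descent (f : Equiv.Perm (Fin m)) (hf : f ≠ 1) :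
    ∃ i j : Fin m, (i : ℕ) + 1 = (j : ℕ) ∧ f j < f i := by
  by_contra hcon
  push_neg at hcon
  apply hf
  apply strictMono_perm_eq_one
  have adj : ∀ i j : Fin m, (i : ℕ) + 1 = (j : ℕ) → f i < f j := by
    intro i j hij
    have h1 := hcon i j hij
    have hne : f i ≠ f j := fun h => by
      have : i = j := f.injective h
      subst this; omega
    exact lt_of_le_of_ne h1 hne
  have step : ∀ d : ℕ, ∀ a b : Fin m, (b : ℕ) = (a : ℕ) + d + 1 → f a < f b := by
    intro d
    induction d with
    | zero => intro a b hab; exact adj a b (by omega)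
    | succ k IH =>
      intro a b hab
      have hcm : (a : ℕ) + k + 1 < m := by have := b.isLt; omega
      have h1 := IH a ⟨(a : ℕ) + k + 1, hcm⟩ (by simp)
      have h2 := adj ⟨(a : ℕ) + k + 1, hcm⟩ b (by simp; omega)
      exact h1.trans h2
  intro a b hab
  have : (b : ℕ) = (a : ℕ) + ((b : ℕ) - (a : ℕ) - 1) + 1 := by
    simp only [Fin.lt_def] at hab; omega
  exact step _ a b this

lemma kendall_eq_zero {α β : Ranking m} (h : kendall α β = 0) : α = β := by
  have hall : ∀ u w : Fin m, u < w → (α u < α w ↔ β u < β w) := by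
    intro u w huw
    by_contra hne
    have : (u, w) ∈ (Finset.univ : Finset (Fin m × Fin m)).filter
        (fun p => p.1 < p.2 ∧ ¬ ((α p.1 < α p.2) ↔ (β p.1 < β p.2))) := by
      simp [huw, hne]
    rw [Finset.card_eq_zero.mp h] at this
    exact absurd this (Finset.notMem_empty _)
  have hφ : StrictMono ((α.symm.trans β) : Fin m → Fin m) := by
    intro i i' hii
    simp only [Equiv.trans_apply]
    set u := α.symm i with hu
    set w := α.symm i' with hw
    have hαu : α u = i := α.apply_symm_apply i
    have hαw : α w = i' := α.apply_symm_apply i'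
    have huw : u ≠ w := by
      intro h
      rw [hu, hw] at h
      exact absurd (α.symm.injective h ▸ hii) (lt_irrefl _)
    rcases lt_trichotomy u w with h | h | h
    · exact (hall u w h).mp (by rw [hαu, hαw]; exact hii)
    · exact absurd h huw
    · have := hall w u h
      have hαwu : ¬ (α w < α u) := by rw [hαu, hαw]; exact lt_asymm hii
      have hβwu : ¬ (β w < β u) := fun hh => hαwu (this.mpr hh)
      have hβne : β u ≠ β w := fun hh => huw (β.injective hh)
      exact lt_of_le_of_ne (not_lt.mp hβwu) hβne
  have h1 : α.symm.trans β = 1 := strictMono_perm_eq_one _ hφ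
  apply Equiv.ext
  intro c
  have := congrArg (fun (e : Equiv.Perm (Fin m)) => e (α c)) h1
  simp only [Equiv.trans_apply, Equiv.symm_apply_apply, Equiv.Perm.coe_one, id_eq] at this
  exact this.symm

/-- Swapping two candidates x,y (π ranks x before y) is strictly better for any
voter ranking y before x. Induction on the position gap. -/
lemma swap_beats (x y : Fin m) (ρ : Ranking m) (hρ : ρ y < ρ x) :
    ∀ g : ℕ, ∀ π : Ranking m, (π y : ℕ) = (π x : ℕ) + g + 1 →
      kendall ((Equiv.swap x y).trans π) ρ < kendall π ρ := by
  intro g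
  induction g with
  | zero =>
    intro π hg
    rw [swap_conj]
    apply adj_lt π ρ (π x) (π y) (by omega)
    simpa using hρ
  | succ g IH =>
    intro π hg
    have hxy : x ≠ y := by
      intro h; rw [h] at hg; omega
    have him : (π x : ℕ) + 1 < m := by have := (π y).isLt; omega
    set i' : Fin m := ⟨(π x : ℕ) + 1, him⟩ with hi'
    set z : Fin m := π.symm i' with hz
    have hπz : π z = i' := π.apply_symm_apply i'
    have hπzv : (π z : ℕ) = (π x : ℕ) + 1 := by rw [hπz]
    have hzx : z ≠ x := by
      intro h; rw [h] at hπzv; omega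
    have hzy : z ≠ y := by
      intro h; rw [h] at hπzv; omega
    set π₁ : Ranking m := (Equiv.swap x z).trans π with hπ₁
    have hπ₁x : π₁ x = π z := by
      simp [hπ₁, Equiv.trans_apply, Equiv.swap_apply_left]
    have hπ₁z : π₁ z = π x := by
      simp [hπ₁, Equiv.trans_apply, Equiv.swap_apply_right]
    have hπ₁y : π₁ y = π y := by
      simp [hπ₁, Equiv.trans_apply, Equiv.swap_apply_of_ne_of_ne (Ne.symm hxy) hzy.symm]
    set i : Fin m := π x with hi
    have hij : (i : ℕ) + 1 = (i' : ℕ) := by simp [hi, hi']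
    have hπ₁eq : π₁ = π.trans (Equiv.swap i i') := by
      rw [hπ₁, swap_conj π x z, hπz]
    set τ₁ : Ranking m := (Equiv.swap x y).trans π₁ with hτ₁
    have hπyv : ((π y : ℕ) ≠ (i : ℕ)) ∧ ((π y : ℕ) ≠ (i' : ℕ)) := by
      constructor <;> simp [hi, hi'] <;> omega
    have hτeq : (Equiv.swap x y).trans π = τ₁.trans (Equiv.swap i i') := by
      apply Equiv.ext
      intro c
      simp only [hτ₁, Equiv.trans_apply]
      by_cases hcx : c = x
      · subst hcx
        rw [Equiv.swap_apply_left, hπ₁y,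
          Equiv.swap_apply_of_ne_of_ne (fun h => hπyv.1 (congrArg Fin.val h))
            (fun h => hπyv.2 (congrArg Fin.val h))]
      · by_cases hcy : c = y
        · subst hcy
          rw [Equiv.swap_apply_right, hπ₁x, hπz, Equiv.swap_apply_right, hi]
        · rw [Equiv.swap_apply_of_ne_of_ne hcx hcy]
          by_cases hcz : c = z
          · subst hcz
            rw [hπz, hπ₁z, Equiv.swap_apply_left]
          · have hπ₁c : π₁ c = π c := by
              simp only [hπ₁, Equiv.trans_apply]
              rw [Equiv.swap_apply_of_ne_of_ne hcx hcz]
            rw [hπ₁c, Equiv.swap_apply_of_ne_of_ne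
              (fun h => hcx (π.injective (by rw [hi] at h; exact h)))
              (fun h => hcz (π.injective (by rw [h, ← hπz])))]
    have IH1 : kendall τ₁ ρ < kendall π₁ ρ := by
      apply IH π₁
      rw [hπ₁y, hπ₁x, hπzv]
      omega
    have hρzx : ρ z ≠ ρ x := fun h => hzx (ρ.injective h)
    by_cases hzx' : ρ z < ρ x
    · have h1 : kendall π₁ ρ < kendall π ρ := by
        rw [hπ₁eq]
        apply adj_lt π ρ i i' hij
        have e1 : π.symm i' = z := hz.symm
        have e2 : π.symm i = x := by rw [hi, Equiv.symm_apply_apply]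
        rw [e1, e2]
        exact hzx'
      have h2 : kendall ((Equiv.swap x y).trans π) ρ ≤ kendall τ₁ ρ + 1 := by
        rw [hτeq]
        exact adj_le τ₁ ρ i i' hij
      omega
    · have hxz' : ρ x < ρ z := lt_of_le_of_ne (not_lt.mp hzx') (Ne.symm hρzx)
      by_cases hyz' : ρ y < ρ z
      · have hτ₁y : τ₁ y = i' := by
          simp only [hτ₁, Equiv.trans_apply]
          rw [Equiv.swap_apply_right, hπ₁x, hπz]
        have hτ₁z : τ₁ z = i := by
          simp only [hτ₁, Equiv.trans_apply]
          rw [Equiv.swap_apply_of_ne_of_ne hzx hzy, hπ₁z, hi]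
        have h3 : kendall ((Equiv.swap x y).trans π) ρ < kendall τ₁ ρ := by
          rw [hτeq]
          apply adj_lt τ₁ ρ i i' hij
          have e1 : τ₁.symm i' = y := by rw [← hτ₁y, Equiv.symm_apply_apply]
          have e2 : τ₁.symm i = z := by rw [← hτ₁z, Equiv.symm_apply_apply]
          rw [e1, e2]
          exact hyz'
        have h4 : kendall π₁ ρ ≤ kendall π ρ + 1 := by
          rw [hπ₁eq]
          exact adj_le π ρ i i' hij
        omega
      · have hρzy : ρ z ≠ ρ y := fun h => hzy (ρ.injective h)
        have hzy' : ρ z < ρ y := lt_of_le_of_ne (not_lt.mp hyz') hρzy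
        exact absurd (hxz'.trans hzy') (lt_asymm hρ)

lemma indZ_zero_or_one (α β : Ranking m) (p : Fin m × Fin m) :
    indZ α β p = 0 ∨ indZ α β p = 1 := by
  unfold indZ; split <;> simp

end PopProof

open PopProof Finset in
theorem absPop_iff_simPop_of_le_five {m n : ℕ} (hn : n ≤ 5)
    (prof : Fin n → Ranking m) (π : Ranking m) :
    absPop prof π ↔ simPop prof π := by
  constructor
  · -- hard direction
    intro habs σ hgt
    by_cases hS : 0 < ∑ v : Fin n, ((kendall π (prof v) : ℤ) - (kendall σ (prof v) : ℤ))
    · -- Case B : positive total margin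
      rw [Finset.sum_congr rfl (fun v _ => kendall_sub π σ (prof v)), Finset.sum_comm] at hS
      obtain ⟨p, hp⟩ : ∃ p : Fin m × Fin m,
          0 < ∑ v : Fin n, (2 * indZ π (prof v) p - 1) * indZ π σ p := by
        by_contra hcon
        push_neg at hcon
        exact absurd hS (not_lt.mpr (Finset.sum_nonpos (fun p _ => hcon p)))
      rw [← Finset.sum_mul] at hp
      have hpσ : indZ π σ p = 1 := by
        rcases indZ_zero_or_one π σ p with h | h
        · rw [h, mul_zero] at hp; exact absurd hp (lt_irrefl 0)
        · exact h
      have hp1 : p.1 < p.2 := by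
        by_contra hcon
        unfold indZ at hpσ
        rw [if_neg (fun h => hcon h.1)] at hpσ
        simp at hpσ
      rw [hpσ, mul_one] at hp
      set M := Finset.univ.filter
        (fun v : Fin n => ¬ (π p.1 < π p.2 ↔ (prof v) p.1 < (prof v) p.2)) with hM
      have hcard : ∑ v : Fin n, (2 * indZ π (prof v) p - 1) = 2 * (M.card : ℤ) - n := by
        rw [Finset.sum_sub_distrib, ← Finset.mul_sum]
        have e1 : ∑ v : Fin n, indZ π (prof v) p = (M.card : ℤ) := by
          rw [hM, Finset.card_filter]
          push_cast
          apply Finset.sum_congr rfl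
          intro v _
          unfold indZ
          rw [if_congr (and_iff_right hp1) rfl rfl]
        have e2 : ∑ _v : Fin n, (1 : ℤ) = (n : ℤ) := by simp
        rw [e1, e2]
      rw [hcard] at hp
      have hMn : n < 2 * M.card := by omega
      have hππ : π p.1 ≠ π p.2 := fun h => (ne_of_lt hp1) (π.injective h)
      have hρne : ∀ v : Fin n, (prof v) p.1 ≠ (prof v) p.2 :=
        fun v h => (ne_of_lt hp1) ((prof v).injective h)
      obtain ⟨x, y, hπxy, hrev⟩ : ∃ x y : Fin m, π x < π y ∧
          ∀ v ∈ M, (prof v) y < (prof v) x := by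
        by_cases hxy : π p.1 < π p.2
        · refine ⟨p.1, p.2, hxy, fun v hv => ?_⟩
          rw [hM, Finset.mem_filter] at hv
          have hnv : ¬ ((prof v) p.1 < (prof v) p.2) := fun hh => hv.2 (iff_of_true hxy hh)
          exact lt_of_le_of_ne (not_lt.mp hnv) (Ne.symm (hρne v))
        · have hyx : π p.2 < π p.1 := lt_of_le_of_ne (not_lt.mp hxy) (Ne.symm hππ)
          refine ⟨p.2, p.1, hyx, fun v hv => ?_⟩
          rw [hM, Finset.mem_filter] at hv
          by_contra hnv
          exact hv.2 (iff_of_false hxy hnv)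
      obtain ⟨g, hg⟩ : ∃ g : ℕ, (π y : ℕ) = (π x : ℕ) + g + 1 := by
        refine ⟨(π y : ℕ) - (π x : ℕ) - 1, ?_⟩
        have := hπxy
        simp only [Fin.lt_def] at this
        omega
      set τ := (Equiv.swap x y).trans π with hτ
      have hsub : M ⊆ Finset.univ.filter
          (fun v => kendall τ (prof v) < kendall π (prof v)) := by
        intro v hv
        simp only [Finset.mem_filter, Finset.mem_univ, true_and]
        exact swap_beats x y (prof v) (hrev v hv) g π hg
      have hcard2 : M.card ≤ prefCount prof τ π := Finset.card_le_card hsub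
      exact absurd (by omega : 2 * prefCount prof τ π > n) (habs τ)
    · -- Case C : nonpositive total margin
      push_neg at hS
      set A := Finset.univ.filter
        (fun v : Fin n => kendall σ (prof v) < kendall π (prof v)) with hA
      set B := Finset.univ.filter
        (fun v : Fin n => kendall π (prof v) < kendall σ (prof v)) with hB
      have haA : prefCount prof σ π = A.card := rfl
      have hbB : prefCount prof π σ = B.card := rfl
      have h2a : ¬ (2 * prefCount prof σ π > n) := habs σ
      have hb1 : 1 ≤ B.card := by
        by_contra hb0
        push_neg at hb0
        have hBempty : B = ∅ := Finset.card_eq_zero.mp (by omega)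
        have hnonneg : ∀ v ∈ (Finset.univ : Finset (Fin n)),
            (0:ℤ) ≤ (kendall π (prof v) : ℤ) - (kendall σ (prof v) : ℤ) := by
          intro v _
          have hvB : v ∉ B := by rw [hBempty]; exact Finset.notMem_empty v
          rw [hB, Finset.mem_filter] at hvB
          push_neg at hvB
          have := hvB (Finset.mem_univ v)
          omega
        have hApos : A.Nonempty := by
          apply Finset.card_pos.mp
          omega
        obtain ⟨v₀, hv₀⟩ := hApos
        have hv₀' : kendall σ (prof v₀) < kendall π (prof v₀) := by
          rw [hA, Finset.mem_filter] at hv₀; exact hv₀.2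
        have hpos : 0 < ∑ v : Fin n, ((kendall π (prof v) : ℤ) - (kendall σ (prof v) : ℤ)) :=
          Finset.sum_pos' hnonneg ⟨v₀, Finset.mem_univ v₀, by omega⟩
        omega
      have hkey : A.card = 2 ∧ B.card = 1 ∧ 4 ≤ n := by omega
      set C := Finset.univ.filter
        (fun v : Fin n => kendall σ (prof v) = kendall π (prof v)) with hC
      have hcover : (Finset.univ : Finset (Fin n)) ⊆ A ∪ B ∪ C := by
        intro v _
        simp only [hA, hB, hC, Finset.mem_union, Finset.mem_filter, Finset.mem_univ, true_and]
        omega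
      have hszs : n ≤ A.card + B.card + C.card := by
        have h1 : ((Finset.univ : Finset (Fin n))).card ≤ (A ∪ B ∪ C).card :=
          Finset.card_le_card hcover
        have h2 : (A ∪ B ∪ C).card ≤ (A ∪ B).card + C.card := Finset.card_union_le _ _
        have h3 : (A ∪ B).card ≤ A.card + B.card := Finset.card_union_le _ _
        simp only [Finset.card_univ, Fintype.card_fin] at h1
        omega
      have hCne : C.Nonempty := Finset.card_pos.mp (by omega)
      obtain ⟨k, hk⟩ := hCne
      have hkeq : kendall σ (prof k) = kendall π (prof k) := by
        rw [hC, Finset.mem_filter] at hk; exact hk.2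
      have hneq : σ.symm.trans (prof k) ≠ 1 := by
        intro h1
        have hpk : prof k = σ := by
          apply Equiv.ext; intro c
          have := congrArg (fun (e : Equiv.Perm (Fin m)) => e (σ c)) h1
          simpa [Equiv.trans_apply, Equiv.symm_apply_apply] using this
        have h0 : kendall σ (prof k) = 0 := by rw [hpk]; exact kendall_self σ
        have hπk : π = prof k := kendall_eq_zero (by omega)
        have hπσ : π = σ := hπk.trans hpk
        have hAe : A = ∅ := by
          rw [hA]
          apply Finset.filter_false_of_mem
          intro v _
          rw [hπσ]
          exact lt_irrefl _
        rw [hAe, Finset.card_empty] at hkey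
        omega
      obtain ⟨i, j, hij, hdesc⟩ := exists_descent _ hneq
      set τ := σ.trans (Equiv.swap i j) with hτ
      have hkbeat : kendall τ (prof k) < kendall π (prof k) := by
        rw [← hkeq]
        apply adj_lt σ (prof k) i j hij
        simpa [Equiv.trans_apply] using hdesc
      have hKπσ_even : Even (kendall σ π) := by
        obtain ⟨t, ht⟩ := even_tri σ (prof k) π
        rw [kendall_comm (prof k) π] at ht
        exact ⟨t - kendall π (prof k), by omega⟩
      have hbeats : ∀ v ∈ A, kendall τ (prof v) < kendall π (prof v) := by
        intro v hv
        have hvlt : kendall σ (prof v) < kendall π (prof v) := by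
          rw [hA, Finset.mem_filter] at hv; exact hv.2
        obtain ⟨t2, ht2⟩ := even_tri σ (prof v) π
        rw [kendall_comm (prof v) π] at ht2
        obtain ⟨t1, ht1⟩ := hKπσ_even
        have hle := adj_le σ (prof v) i j hij
        rw [← hτ] at hle
        omega
      set S := Finset.univ.filter
        (fun v : Fin n => kendall τ (prof v) < kendall π (prof v)) with hSS
      have hins : insert k A ⊆ S := by
        intro v hv
        rcases Finset.mem_insert.mp hv with rfl | hvA
        · rw [hSS, Finset.mem_filter]; exact ⟨Finset.mem_univ v, hkbeat⟩
        · rw [hSS, Finset.mem_filter]; exact ⟨Finset.mem_univ v, hbeats v hvA⟩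
      have hkA : k ∉ A := by
        rw [hA, Finset.mem_filter]
        push_neg
        intro _
        omega
      have hScard : 3 ≤ S.card := by
        have h1 := Finset.card_le_card hins
        rw [Finset.card_insert_of_notMem hkA] at h1
        omega
      have hSpc : prefCount prof τ π = S.card := rfl
      exact absurd (by omega : 2 * prefCount prof τ π > n) (habs τ)
  · -- easy direction
    intro hsim σ h2a
    set A := Finset.univ.filter
      (fun v : Fin n => kendall σ (prof v) < kendall π (prof v)) with hA
    set B := Finset.univ.filter
      (fun v : Fin n => kendall π (prof v) < kendall σ (prof v)) with hB
    have hdisj : Disjoint A B := by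
      rw [Finset.disjoint_left]
      intro v h1 h2
      rw [hA, Finset.mem_filter] at h1
      rw [hB, Finset.mem_filter] at h2
      omega
    have hcu : (A ∪ B).card = A.card + B.card := Finset.card_union_of_disjoint hdisj
    have hle : (A ∪ B).card ≤ n := by
      have := Finset.card_le_univ (A ∪ B)
      simpa [Finset.card_univ, Fintype.card_fin] using this
    have haA : prefCount prof σ π = A.card := rfl
    have hbB : prefCount prof π σ = B.card := rfl
    exact hsim σ (by omega)
end

section
/- There exists a voting instance with 6 voters admitting a ranking that is absolutely popular but not simply popular. -/
def p0 : Ranking 4 := ⟨![0,1,2,3], ![0,1,2,3], by decide, by decide⟩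
def p1 : Ranking 4 := ⟨![0,1,3,2], ![0,1,3,2], by decide, by decide⟩
def p2 : Ranking 4 := ⟨![1,3,0,2], ![2,0,3,1], by decide, by decide⟩
def p3 : Ranking 4 := ⟨![1,3,2,0], ![3,0,2,1], by decide, by decide⟩
def p4 : Ranking 4 := ⟨![2,3,0,1], ![2,3,0,1], by decide, by decide⟩
def p5 : Ranking 4 := ⟨![3,0,2,1], ![1,3,2,0], by decide, by decide⟩

theorem exists_absPop_not_simPop_six_voters :
    ∃ (m : ℕ) (prof : Fin 6 → Ranking m) (π : Ranking m),
      absPop prof π ∧ ¬ simPop prof π := by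
  refine ⟨4, ![p0,p1,p2,p3,p4,p5], p3, ?_, ?_⟩
  · unfold absPop; decide
  · unfold simPop; decide
end

section
/- Every absolutely popular ranking of a voting instance is topologically sorted: for every pair of candidates a, b, if a strict majority of voters ranks a before b, then the absolutely popular ranking ranks a before b. -/
lemma dis_symm {m : ℕ} (ρ τ : Ranking m) {x y : Fin m} (hxy : x ≠ y)
    (h : ¬(ρ x < ρ y ↔ τ x < τ y)) : ¬(ρ y < ρ x ↔ τ y < τ x) := by
  have h1 : ρ x ≠ ρ y := fun e => hxy (ρ.injective e)
  have h2 : τ x ≠ τ y := fun e => hxy (τ.injective e)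
  rcases lt_or_gt_of_ne h1 with h1 | h1 <;> rcases lt_or_gt_of_ne h2 with h2 | h2 <;>
    simp_all [lt_asymm, not_lt_of_gt]

/-- the pairs affected by swapping `a` and `b` (one coordinate is `a` or `b`,
the other lies strictly between them in `π`). -/
def Cnd {m : ℕ} (π : Ranking m) (a b : Fin m) (p : Fin m × Fin m) : Prop :=
  ((p.1 = a ∨ p.1 = b) ∧ (π b < π p.2 ∧ π p.2 < π a)) ∨
  ((p.2 = a ∨ p.2 = b) ∧ (π b < π p.1 ∧ π p.1 < π a))

open Classical in
/-- pairing up affected pairs -/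
noncomputable def efun {m : ℕ} (π : Ranking m) (a b : Fin m) (p : Fin m × Fin m) :
    Fin m × Fin m :=
  if Cnd π a b p ∧ p.1 < p.2 then
    (if Equiv.swap a b p.1 < Equiv.swap a b p.2
      then (Equiv.swap a b p.1, Equiv.swap a b p.2)
      else (Equiv.swap a b p.2, Equiv.swap a b p.1))
  else p

lemma efun_pos {m : ℕ} (π : Ranking m) (a b : Fin m) (p : Fin m × Fin m)
    (h : Cnd π a b p ∧ p.1 < p.2) :
    efun π a b p = (if Equiv.swap a b p.1 < Equiv.swap a b p.2
      then (Equiv.swap a b p.1, Equiv.swap a b p.2)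
      else (Equiv.swap a b p.2, Equiv.swap a b p.1)) := by
  rw [efun, if_pos h]

lemma efun_neg {m : ℕ} (π : Ranking m) (a b : Fin m) (p : Fin m × Fin m)
    (h : ¬ (Cnd π a b p ∧ p.1 < p.2)) : efun π a b p = p := by
  rw [efun, if_neg h]

lemma between_ne {m : ℕ} (π : Ranking m) (a b : Fin m) {c : Fin m}
    (h1 : π b < π c) (h2 : π c < π a) : c ≠ a ∧ c ≠ b := by
  constructor
  · rintro rfl; exact lt_irrefl _ h2
  · rintro rfl; exact lt_irrefl _ h1

lemma efun_invol {m : ℕ} (π : Ranking m) (a b : Fin m) :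
    Function.Involutive (efun π a b) := by
  intro p
  by_cases hp : Cnd π a b p ∧ p.1 < p.2
  · rw [efun_pos _ _ _ _ hp]
    have hps : Equiv.swap a b p.1 ≠ Equiv.swap a b p.2 :=
      fun h => (ne_of_lt hp.2) ((Equiv.swap a b).injective h)
    -- the image pair again satisfies the condition
    have hC2 : ∀ q : Fin m × Fin m, q.1 = Equiv.swap a b p.1 → q.2 = Equiv.swap a b p.2 ∨
        (q.1 = Equiv.swap a b p.2 ∧ q.2 = Equiv.swap a b p.1) → True := fun _ _ _ => trivial
    rcases hp.1 with ⟨h1, h2⟩ | ⟨h1, h2⟩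
    · -- p.1 ∈ {a,b}, p.2 between
      obtain ⟨hna, hnb⟩ := between_ne π a b h2.1 h2.2
      have hs2 : Equiv.swap a b p.2 = p.2 := Equiv.swap_apply_of_ne_of_ne hna hnb
      have hs1 : Equiv.swap a b p.1 = a ∨ Equiv.swap a b p.1 = b := by
        rcases h1 with h | h <;> simp [h, Equiv.swap_apply_left, Equiv.swap_apply_right]
      split
      · next hlt =>
        have hC : Cnd π a b (Equiv.swap a b p.1, Equiv.swap a b p.2) := by
          left; exact ⟨hs1, by rw [hs2]; exact h2⟩
        rw [efun_pos _ _ _ _ ⟨hC, hlt⟩]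
        simp only [Equiv.swap_apply_self]
        rw [if_pos hp.2]
      · next hlt =>
        have hlt' : Equiv.swap a b p.2 < Equiv.swap a b p.1 :=
          lt_of_le_of_ne (not_lt.mp hlt) (Ne.symm hps)
        have hC : Cnd π a b (Equiv.swap a b p.2, Equiv.swap a b p.1) := by
          right; exact ⟨hs1, by rw [hs2]; exact h2⟩
        rw [efun_pos _ _ _ _ ⟨hC, hlt'⟩]
        simp only [Equiv.swap_apply_self]
        rw [if_neg (by exact not_lt.mpr (le_of_lt hp.2))]
    · -- p.2 ∈ {a,b}, p.1 between
      obtain ⟨hna, hnb⟩ := between_ne π a b h2.1 h2.2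
      have hs1 : Equiv.swap a b p.1 = p.1 := Equiv.swap_apply_of_ne_of_ne hna hnb
      have hs2 : Equiv.swap a b p.2 = a ∨ Equiv.swap a b p.2 = b := by
        rcases h1 with h | h <;> simp [h, Equiv.swap_apply_left, Equiv.swap_apply_right]
      split
      · next hlt =>
        have hC : Cnd π a b (Equiv.swap a b p.1, Equiv.swap a b p.2) := by
          right; exact ⟨hs2, by rw [hs1]; exact h2⟩
        rw [efun_pos _ _ _ _ ⟨hC, hlt⟩]
        simp only [Equiv.swap_apply_self]
        rw [if_pos hp.2]
      · next hlt =>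
        have hlt' : Equiv.swap a b p.2 < Equiv.swap a b p.1 :=
          lt_of_le_of_ne (not_lt.mp hlt) (Ne.symm hps)
        have hC : Cnd π a b (Equiv.swap a b p.2, Equiv.swap a b p.1) := by
          left; exact ⟨hs2, by rw [hs1]; exact h2⟩
        rw [efun_pos _ _ _ _ ⟨hC, hlt'⟩]
        simp only [Equiv.swap_apply_self]
        rw [if_neg (by exact not_lt.mpr (le_of_lt hp.2))]
  · rw [efun_neg _ _ _ _ hp, efun_neg _ _ _ _ hp]

lemma vne {m : ℕ} (ρ : Ranking m) {x y : Fin m} (h : x ≠ y) : (ρ x : ℕ) ≠ (ρ y : ℕ) :=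
  fun hh => h (ρ.injective (Fin.val_injective hh))

lemma pointwise {m : ℕ} (π τ : Ranking m) (a b : Fin m)
    (hab : π b < π a) (hτ : τ a < τ b) (p : Fin m × Fin m)
    (hxy : p.1 < p.2)
    (hd : ¬(π (Equiv.swap a b p.1) < π (Equiv.swap a b p.2) ↔ τ p.1 < τ p.2)) :
    (efun π a b p).1 < (efun π a b p).2 ∧
      ¬(π (efun π a b p).1 < π (efun π a b p).2 ↔
          τ (efun π a b p).1 < τ (efun π a b p).2) := by
  obtain ⟨x, y⟩ := p
  simp only at hxy hd
  have hne : a ≠ b := fun e => lt_irrefl _ (e ▸ hab)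
  by_cases hC : Cnd π a b (x, y)
  · rw [efun_pos π a b (x, y) ⟨hC, hxy⟩]
    have hsne : Equiv.swap a b x ≠ Equiv.swap a b y :=
      fun h => (ne_of_lt hxy) ((Equiv.swap a b).injective h)
    have hd' : ¬(π (Equiv.swap a b x) < π (Equiv.swap a b y) ↔
        τ (Equiv.swap a b x) < τ (Equiv.swap a b y)) := by
      simp only [Cnd] at hC
      rcases hC with ⟨h1, hby, hya⟩ | ⟨h1, hbx, hxa⟩
      · obtain ⟨hna, hnb⟩ := between_ne π a b hby hya
        rw [Equiv.swap_apply_of_ne_of_ne hna hnb] at hd ⊢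
        rcases h1 with rfl | rfl
        · rw [Equiv.swap_apply_left] at hd ⊢
          have e1 := vne τ hna
          simp only [Fin.lt_def] at hd hτ hab hby hya ⊢
          omega
        · rw [Equiv.swap_apply_right] at hd ⊢
          have e1 := vne τ hnb
          simp only [Fin.lt_def] at hd hτ hab hby hya ⊢
          omega
      · obtain ⟨hna, hnb⟩ := between_ne π a b hbx hxa
        rw [Equiv.swap_apply_of_ne_of_ne hna hnb] at hd ⊢
        rcases h1 with rfl | rfl
        · rw [Equiv.swap_apply_left] at hd ⊢
          have e1 := vne τ hna
          simp only [Fin.lt_def] at hd hτ hab hbx hxa ⊢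
          omega
        · rw [Equiv.swap_apply_right] at hd ⊢
          have e1 := vne τ hnb
          simp only [Fin.lt_def] at hd hτ hab hbx hxa ⊢
          omega
    split
    · next hlt => exact ⟨hlt, hd'⟩
    · next hlt =>
        exact ⟨lt_of_le_of_ne (not_lt.mp hlt) (Ne.symm hsne), dis_symm π τ hsne hd'⟩
  · rw [efun_neg π a b (x, y) (fun h => hC h.1)]
    refine ⟨hxy, ?_⟩
    by_cases hxa : x = a
    · by_cases hya : y = a
      · exact absurd (hxa.trans hya.symm) (ne_of_lt hxy)
      · by_cases hyb : y = b
        · rw [hxa, hyb]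
          simp only [Fin.lt_def] at hab hτ ⊢
          omega
        · have hnbet : ¬(π b < π y ∧ π y < π a) :=
            fun hbet => hC (Or.inl ⟨Or.inl hxa, hbet⟩)
          rw [hxa] at hd
          rw [hxa]
          rw [Equiv.swap_apply_left, Equiv.swap_apply_of_ne_of_ne hya hyb] at hd
          have e1 := vne π hya
          have e2 := vne π hyb
          have e3 := vne τ hya
          simp only [Fin.lt_def, not_and] at hd hτ hab hnbet e1 e2 e3 ⊢
          omega
    · by_cases hxb : x = b
      · by_cases hya : y = a
        · rw [hxb, hya]
          have e1 := vne τ hne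
          simp only [Fin.lt_def] at hab hτ e1 ⊢
          omega
        · by_cases hyb : y = b
          · exact absurd (hxb.trans hyb.symm) (ne_of_lt hxy)
          · have hnbet : ¬(π b < π y ∧ π y < π a) :=
              fun hbet => hC (Or.inl ⟨Or.inr hxb, hbet⟩)
            rw [hxb] at hd
            rw [hxb]
            rw [Equiv.swap_apply_right, Equiv.swap_apply_of_ne_of_ne hya hyb] at hd
            have e1 := vne π hya
            have e2 := vne π hyb
            have e3 := vne τ hyb
            simp only [Fin.lt_def, not_and] at hd hτ hab hnbet e1 e2 e3 ⊢
            omega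
      · by_cases hya : y = a
        · have hnbet : ¬(π b < π x ∧ π x < π a) :=
            fun hbet => hC (Or.inr ⟨Or.inl hya, hbet⟩)
          rw [hya] at hd
          rw [hya]
          rw [Equiv.swap_apply_left, Equiv.swap_apply_of_ne_of_ne hxa hxb] at hd
          have e1 := vne π hxa
          have e2 := vne π hxb
          have e3 := vne τ hxa
          simp only [Fin.lt_def, not_and] at hd hτ hab hnbet e1 e2 e3 ⊢
          omega
        · by_cases hyb : y = b
          · have hnbet : ¬(π b < π x ∧ π x < π a) :=
              fun hbet => hC (Or.inr ⟨Or.inr hyb, hbet⟩)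
            rw [hyb] at hd
            rw [hyb]
            rw [Equiv.swap_apply_right, Equiv.swap_apply_of_ne_of_ne hxa hxb] at hd
            have e1 := vne π hxa
            have e2 := vne π hxb
            have e3 := vne τ hxb
            simp only [Fin.lt_def, not_and] at hd hτ hab hnbet e1 e2 e3 ⊢
            omega
          · rw [Equiv.swap_apply_of_ne_of_ne hxa hxb,
              Equiv.swap_apply_of_ne_of_ne hya hyb] at hd
            exact hd

lemma kendall_swap_lt {m : ℕ} (π τ : Ranking m) (a b : Fin m)
    (hab : π b < π a) (hτ : τ a < τ b) :
    kendall ((Equiv.swap a b).trans π) τ < kendall π τ := by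
  classical
  have hne : a ≠ b := fun e => lt_irrefl _ (e ▸ hab)
  have hk : ∀ ρ : Ranking m, kendall ρ τ =
      ∑ p : Fin m × Fin m,
        if p.1 < p.2 ∧ ¬(ρ p.1 < ρ p.2 ↔ τ p.1 < τ p.2) then 1 else 0 := by
    intro ρ; rw [kendall, Finset.card_filter]
  rw [hk, hk]
  have hsum : ∑ p : Fin m × Fin m, (if (efun π a b p).1 < (efun π a b p).2 ∧
      ¬(π (efun π a b p).1 < π (efun π a b p).2 ↔
        τ (efun π a b p).1 < τ (efun π a b p).2) then 1 else 0)
      = ∑ p : Fin m × Fin m,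
        if p.1 < p.2 ∧ ¬(π p.1 < π p.2 ↔ τ p.1 < τ p.2) then 1 else 0 :=
    Fintype.sum_bijective (efun π a b) (efun_invol π a b).bijective _ _ (fun _ => rfl)
  rw [← hsum]
  apply Finset.sum_lt_sum
  · intro p _
    by_cases hcase : p.1 < p.2 ∧
        ¬(((Equiv.swap a b).trans π) p.1 < ((Equiv.swap a b).trans π) p.2 ↔
          τ p.1 < τ p.2)
    · rw [if_pos hcase, if_pos (pointwise π τ a b hab hτ p hcase.1 hcase.2)]
    · rw [if_neg hcase]; exact Nat.zero_le _
  · rcases lt_or_gt_of_ne hne with hlt | hlt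
    · refine ⟨(a, b), Finset.mem_univ _, ?_⟩
      have hCn : ¬ Cnd π a b (a, b) := by
        rintro (⟨-, h1, -⟩ | ⟨-, -, h2⟩)
        · exact lt_irrefl _ h1
        · exact lt_irrefl _ h2
      rw [efun_neg π a b (a, b) (fun hh => hCn hh.1)]
      rw [if_neg, if_pos]
      · norm_num
      · exact ⟨hlt, fun hh => lt_asymm hab (hh.mpr hτ)⟩
      · rintro ⟨-, hh⟩
        refine hh (iff_of_true ?_ hτ)
        simpa [Equiv.trans_apply, Equiv.swap_apply_left, Equiv.swap_apply_right] using hab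
    · refine ⟨(b, a), Finset.mem_univ _, ?_⟩
      have hCn : ¬ Cnd π a b (b, a) := by
        rintro (⟨-, -, h1⟩ | ⟨-, h2, -⟩)
        · exact lt_irrefl _ h1
        · exact lt_irrefl _ h2
      rw [efun_neg π a b (b, a) (fun hh => hCn hh.1)]
      rw [if_neg, if_pos]
      · norm_num
      · exact ⟨hlt, fun hh => (not_lt_of_gt hτ) (hh.mp hab)⟩
      · rintro ⟨-, hh⟩
        refine hh (iff_of_false ?_ (not_lt_of_gt hτ))
        simpa [Equiv.trans_apply, Equiv.swap_apply_left, Equiv.swap_apply_right] using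
          not_lt_of_gt hab

theorem absPop_topSorted {m n : ℕ} (prof : Fin n → Ranking m) (π : Ranking m)
    (h : absPop prof π) : topSorted prof π := by
  intro a b hmaj
  by_contra hcon
  have hne : a ≠ b := by
    rintro rfl
    simp [maj] at hmaj
  have hba : π b < π a :=
    lt_of_le_of_ne (not_lt.mp hcon) (fun hh => hne (π.injective hh).symm)
  apply h ((Equiv.swap a b).trans π)
  have hsub : Finset.univ.filter (fun v => prof v a < prof v b) ⊆
      Finset.univ.filter (fun v =>
        kendall ((Equiv.swap a b).trans π) (prof v) < kendall π (prof v)) := by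
    intro v hv
    simp only [Finset.mem_filter, Finset.mem_univ, true_and] at hv ⊢
    exact kendall_swap_lt π (prof v) a b hba hv
  exact lt_of_lt_of_le hmaj (Nat.mul_le_mul_left 2 (Finset.card_le_card hsub))
end

section
/- In any voting instance, every topologically sorted ranking is a Kemeny consensus; moreover, if the majority graph of the instance is acyclic, a ranking is topologically sorted if and only if it is a Kemeny consensus. -/
/-- `π` is a Kemeny consensus: it minimises the sum of Kendall distances to the voters. -/
def kemenyConsensus {m n : ℕ} (prof : Fin n → Ranking m) (π : Ranking m) : Prop :=
  ∀ σ : Ranking m, ∑ v, kendall π (prof v) ≤ ∑ v, kendall σ (prof v)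

def cnt {m n : ℕ} (prof : Fin n → Ranking m) (a b : Fin m) : ℕ :=
  (Finset.univ.filter fun v => prof v a < prof v b).card

def pairCost {m n : ℕ} (prof : Fin n → Ranking m) (π : Ranking m) (p : Fin m × Fin m) : ℕ :=
  if π p.1 < π p.2 then cnt prof p.2 p.1 else cnt prof p.1 p.2

lemma cnt_add {m n : ℕ} (prof : Fin n → Ranking m) {a b : Fin m} (hab : a ≠ b) :
    cnt prof a b + cnt prof b a = n := by
  have key : (Finset.univ.filter fun v => prof v b < prof v a)
      = (Finset.univ.filter fun v : Fin n => ¬ prof v a < prof v b) := by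
    apply Finset.filter_congr
    intro v _
    have h := (prof v).injective.ne hab
    constructor
    · exact fun h1 h2 => absurd (h1.trans h2) (lt_irrefl _)
    · intro h1
      rcases lt_or_gt_of_ne h with h2 | h2
      · exact absurd h2 h1
      · exact h2
  unfold cnt
  rw [key, Finset.card_filter_add_card_filter_not, Finset.card_univ,
    Fintype.card_fin]

lemma rank_eq {m n : ℕ} (prof : Fin n → Ranking m) (π : Ranking m) :
    ∑ v, kendall π (prof v) =
      ∑ p ∈ Finset.univ.filter (fun p : Fin m × Fin m => p.1 < p.2), pairCost prof π p := by
  have h1 : ∀ σ : Ranking m, kendall π σ =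
      ∑ p ∈ Finset.univ.filter (fun p : Fin m × Fin m => p.1 < p.2),
        (if ¬ ((π p.1 < π p.2) ↔ (σ p.1 < σ p.2)) then 1 else 0) := by
    intro σ
    unfold kendall
    rw [← Finset.filter_filter, Finset.card_filter]
  simp_rw [h1]
  rw [Finset.sum_comm]
  refine Finset.sum_congr rfl ?_
  intro p hp
  have hp' : p.1 < p.2 := (Finset.mem_filter.mp hp).2
  have hne : p.1 ≠ p.2 := ne_of_lt hp'
  unfold pairCost cnt
  by_cases hππ : π p.1 < π p.2
  · rw [if_pos hππ]
    rw [← Finset.card_filter]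
    apply congrArg
    apply Finset.filter_congr
    intro v _
    have h := ((prof v).injective.ne hne).symm
    simp only [iff_true_left hππ, eq_iff_iff]
    exact ⟨fun h1 => h.symm.lt_or_gt.resolve_left h1, fun h1 h2 => absurd (h2.trans h1) (lt_irrefl _)⟩
  · rw [if_neg hππ]
    rw [← Finset.card_filter]
    apply congrArg
    apply Finset.filter_congr
    intro v _
    simp [hππ]

lemma min_le_pairCost {m n : ℕ} (prof : Fin n → Ranking m) (π : Ranking m)
    (p : Fin m × Fin m) :
    min (cnt prof p.1 p.2) (cnt prof p.2 p.1) ≤ pairCost prof π p := by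
  unfold pairCost
  split
  · exact min_le_right _ _
  · exact min_le_left _ _

lemma topSorted_pairCost {m n : ℕ} (prof : Fin n → Ranking m) (π : Ranking m)
    (hts : topSorted prof π) (p : Fin m × Fin m) (hp : p.1 < p.2) :
    pairCost prof π p = min (cnt prof p.1 p.2) (cnt prof p.2 p.1) := by
  have hne : p.1 ≠ p.2 := ne_of_lt hp
  have hadd := cnt_add prof hne
  by_cases h1 : 2 * cnt prof p.1 p.2 > n
  · have hlt : π p.1 < π p.2 := hts p.1 p.2 h1
    rw [pairCost, if_pos hlt]
    omega
  · by_cases h2 : 2 * cnt prof p.2 p.1 > n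
    · have hlt : π p.2 < π p.1 := hts p.2 p.1 h2
      have hnlt : ¬ π p.1 < π p.2 := fun h => absurd (h.trans hlt) (lt_irrefl _)
      rw [pairCost, if_neg hnlt]
      omega
    · have heq : cnt prof p.1 p.2 = cnt prof p.2 p.1 := by omega
      rw [pairCost]
      split <;> omega

/-- Existence of a topologically sorted ranking when the majority graph is acyclic. -/
lemma exists_topSorted {m n : ℕ} (prof : Fin n → Ranking m)
    (hacy : acyclicRel (maj prof)) : ∃ π₀ : Ranking m, topSorted prof π₀ := by
  classical
  set r : Fin m → Fin m → Prop := Relation.TransGen (maj prof) with hr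
  set f : Fin m → ℕ := fun a => (Finset.univ.filter fun x => r x a).card with hfdef
  have hf : ∀ a b : Fin m, maj prof a b → f a < f b := by
    intro a b hab
    apply Finset.card_lt_card
    constructor
    · intro x hx
      simp only [Finset.mem_filter, Finset.mem_univ, true_and] at hx ⊢
      exact hx.trans (Relation.TransGen.single hab)
    · intro hsub
      have ha : a ∈ Finset.univ.filter fun x => r x b := by
        simp only [Finset.mem_filter, Finset.mem_univ, true_and]
        exact Relation.TransGen.single hab
      have := hsub ha
      simp only [Finset.mem_filter, Finset.mem_univ, true_and] at this
      exact hacy a this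
  set S : Fin m → Finset (Fin m) :=
    fun a => Finset.univ.filter fun x => f x < f a ∨ (f x = f a ∧ x < a) with hSdef
  have hanotin : ∀ a : Fin m, a ∉ S a := by
    intro a ha
    simp [hSdef] at ha
  have hcard : ∀ a : Fin m, (S a).card < m := by
    intro a
    calc (S a).card ≤ (Finset.univ.erase a).card := by
          apply Finset.card_le_card
          intro x hx
          refine Finset.mem_erase.mpr ⟨?_, Finset.mem_univ x⟩
          intro h; exact hanotin x (h ▸ hx)
      _ < m := by
          rw [Finset.card_erase_of_mem (Finset.mem_univ a), Finset.card_univ,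
            Fintype.card_fin]
          have := a.pos
          omega
  set g : Fin m → Fin m := fun a => ⟨(S a).card, hcard a⟩ with hgdef
  have hmono : ∀ a b : Fin m, (f a < f b ∨ (f a = f b ∧ a < b)) → g a < g b := by
    intro a b hab
    have hss : S a ⊂ S b := by
      constructor
      · intro x hx
        simp only [hSdef, Finset.mem_filter, Finset.mem_univ, true_and] at hx ⊢
        rcases hab with h | ⟨he, hl⟩
        · rcases hx with h' | ⟨he', _⟩
          · exact Or.inl (h'.trans h)
          · exact Or.inl (he' ▸ h)
        · rcases hx with h' | ⟨he', hl'⟩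
          · exact Or.inl (he ▸ h')
          · exact Or.inr ⟨he'.trans he, hl'.trans hl⟩
      · intro hsub
        have ha : a ∈ S b := by
          simp only [hSdef, Finset.mem_filter, Finset.mem_univ, true_and]
          rcases hab with h | ⟨he, hl⟩
          · exact Or.inl h
          · exact Or.inr ⟨he, hl⟩
        exact hanotin a (hsub ha)
    exact Finset.card_lt_card hss
  have hginj : Function.Injective g := by
    intro a b hab
    by_contra hne
    have htot : (f a < f b ∨ (f a = f b ∧ a < b)) ∨ (f b < f a ∨ (f b = f a ∧ b < a)) := by
      rcases lt_trichotomy (f a) (f b) with h | h | h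
      · exact Or.inl (Or.inl h)
      · rcases lt_or_gt_of_ne hne with h' | h'
        · exact Or.inl (Or.inr ⟨h, h'⟩)
        · exact Or.inr (Or.inr ⟨h.symm, h'⟩)
      · exact Or.inr (Or.inl h)
    rcases htot with h | h
    · exact absurd hab (ne_of_lt (hmono a b h))
    · exact absurd hab.symm (ne_of_lt (hmono b a h))
  refine ⟨Equiv.ofBijective g (Finite.injective_iff_bijective.mp hginj), ?_⟩
  intro a b hmaj
  exact hmono a b (Or.inl (hf a b hmaj))

theorem topSorted_kemeny {m n : ℕ} (prof : Fin n → Ranking m) :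
    (∀ π : Ranking m, topSorted prof π → kemenyConsensus prof π) ∧
    (acyclicRel (maj prof) →
      ∀ π : Ranking m, topSorted prof π ↔ kemenyConsensus prof π) := by
  have part1 : ∀ π : Ranking m, topSorted prof π → kemenyConsensus prof π := by
    intro π hts σ
    rw [rank_eq, rank_eq]
    calc ∑ p ∈ Finset.univ.filter (fun p : Fin m × Fin m => p.1 < p.2), pairCost prof π p
        = ∑ p ∈ Finset.univ.filter (fun p : Fin m × Fin m => p.1 < p.2),
            min (cnt prof p.1 p.2) (cnt prof p.2 p.1) :=
          Finset.sum_congr rfl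
            (fun p hp => topSorted_pairCost prof π hts p (Finset.mem_filter.mp hp).2)
      _ ≤ ∑ p ∈ Finset.univ.filter (fun p : Fin m × Fin m => p.1 < p.2), pairCost prof σ p :=
          Finset.sum_le_sum (fun p _ => min_le_pairCost prof σ p)
  refine ⟨part1, fun hacy π => ⟨part1 π, ?_⟩⟩
  intro hcons
  obtain ⟨π₀, hπ₀⟩ := exists_topSorted prof hacy
  have h0 := hcons π₀
  rw [rank_eq, rank_eq] at h0
  have hmin : ∑ p ∈ Finset.univ.filter (fun p : Fin m × Fin m => p.1 < p.2), pairCost prof π₀ p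
      = ∑ p ∈ Finset.univ.filter (fun p : Fin m × Fin m => p.1 < p.2),
          min (cnt prof p.1 p.2) (cnt prof p.2 p.1) :=
    Finset.sum_congr rfl
      (fun p hp => topSorted_pairCost prof π₀ hπ₀ p (Finset.mem_filter.mp hp).2)
  have hterm : ∀ p ∈ Finset.univ.filter (fun p : Fin m × Fin m => p.1 < p.2),
      pairCost prof π p = min (cnt prof p.1 p.2) (cnt prof p.2 p.1) := by
    by_contra hc
    push_neg at hc
    obtain ⟨p0, hp0mem, hp0⟩ := hc
    have hlt : ∑ p ∈ Finset.univ.filter (fun p : Fin m × Fin m => p.1 < p.2),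
        min (cnt prof p.1 p.2) (cnt prof p.2 p.1)
        < ∑ p ∈ Finset.univ.filter (fun p : Fin m × Fin m => p.1 < p.2), pairCost prof π p :=
      Finset.sum_lt_sum (fun p _ => min_le_pairCost prof π p)
        ⟨p0, hp0mem, lt_of_le_of_ne (min_le_pairCost prof π p0) (Ne.symm hp0)⟩
    exact absurd (lt_of_le_of_lt (hmin ▸ h0) hlt) (lt_irrefl _)
  intro a b hmaj
  have hne : a ≠ b := by
    rintro rfl
    simp only [maj, lt_self_iff_false, Finset.filter_false, Finset.card_empty,
      Nat.mul_zero, gt_iff_lt] at hmaj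
    omega
  have hAB : cnt prof a b + cnt prof b a = n := cnt_add prof hne
  have hmaj' : 2 * cnt prof a b > n := hmaj
  rcases lt_or_gt_of_ne hne with hab | hab
  · have hp : ((a, b) : Fin m × Fin m) ∈
        Finset.univ.filter (fun p : Fin m × Fin m => p.1 < p.2) :=
      Finset.mem_filter.mpr ⟨Finset.mem_univ _, hab⟩
    have heq := hterm (a, b) hp
    by_contra hnlt
    simp only [pairCost, if_neg hnlt] at heq
    omega
  · have hp : ((b, a) : Fin m × Fin m) ∈
        Finset.univ.filter (fun p : Fin m × Fin m => p.1 < p.2) :=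
      Finset.mem_filter.mpr ⟨Finset.mem_univ _, hab⟩
    have heq := hterm (b, a) hp
    by_contra hnlt
    have hlt : π b < π a := (π.injective.ne hne).lt_or_gt.resolve_left hnlt
    simp only [pairCost, if_pos hlt] at heq
    omega
end

section
/- If every pair of distinct candidates a,b with a ranked before b in π is such that at least a 3/4-fraction of all voters rank a before b, then π is absolutely popular. -/
/-- pairs where π and σ disagree -/
def disag {m : ℕ} (π σ : Ranking m) : Finset (Fin m × Fin m) :=
  (Finset.univ : Finset (Fin m × Fin m)).filter
    (fun p => p.1 < p.2 ∧ ¬ ((π p.1 < π p.2) ↔ (σ p.1 < σ p.2)))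

lemma kendall_decomp {m : ℕ} (π σ τ : Ranking m) :
    kendall σ τ + ((disag π σ).filter
        (fun p => (σ p.1 < σ p.2) ↔ (τ p.1 < τ p.2))).card
      = kendall π τ + ((disag π σ).filter
        (fun p => ¬ ((σ p.1 < σ p.2) ↔ (τ p.1 < τ p.2)))).card := by
  classical
  unfold kendall disag
  rw [Finset.filter_filter, Finset.filter_filter, Finset.card_filter, Finset.card_filter,
      Finset.card_filter, Finset.card_filter, ← Finset.sum_add_distrib,
      ← Finset.sum_add_distrib]
  apply Finset.sum_congr rfl
  intro p _
  by_cases h1 : p.1 < p.2 <;> by_cases h2 : π p.1 < π p.2 <;>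
    by_cases h3 : σ p.1 < σ p.2 <;> by_cases h4 : τ p.1 < τ p.2 <;>
    simp [h1, h2, h3, h4]

theorem three_quarters_sorted_absPop {m n : ℕ} (prof : Fin n → Ranking m)
    (π : Ranking m)
    (hsorted : ∀ a b : Fin m, π a < π b →
      4 * (Finset.univ.filter (fun v => prof v a < prof v b)).card ≥ 3 * n) :
    absPop prof π := by
  classical
  intro σ hgt
  set D : Finset (Fin m × Fin m) := disag π σ with hDdef
  set A : Fin n → ℕ := fun v => (D.filter
      (fun p => ((σ p.1 < σ p.2) ↔ (prof v p.1 < prof v p.2)))).card with hA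
  set B : Fin n → ℕ := fun v => (D.filter
      (fun p => ¬ ((σ p.1 < σ p.2) ↔ (prof v p.1 < prof v p.2)))).card with hB
  have hAB : ∀ v, A v + B v = D.card := by
    intro v
    simpa [hA, hB] using Finset.card_filter_add_card_filter_not
      (s := D) (p := fun p => ((σ p.1 < σ p.2) ↔ (prof v p.1 < prof v p.2)))
  have hdecomp : ∀ v, kendall σ (prof v) + A v = kendall π (prof v) + B v :=
    fun v => kendall_decomp π σ (prof v)
  -- per-pair bound
  have hpair : ∀ p ∈ D, 4 * (Finset.univ.filter
      (fun v => (σ p.1 < σ p.2) ↔ (prof v p.1 < prof v p.2))).card ≤ n := by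
    intro p hp
    rw [hDdef, disag, Finset.mem_filter] at hp
    obtain ⟨-, hlt, hdis⟩ := hp
    have hne : π p.1 ≠ π p.2 := fun h => absurd (π.injective h) (ne_of_lt hlt)
    by_cases hπ : π p.1 < π p.2
    · have hσ : ¬ σ p.1 < σ p.2 := fun h => hdis ⟨fun _ => h, fun _ => hπ⟩
      have hs := hsorted p.1 p.2 hπ
      have hsub : Finset.univ.filter
            (fun v => (σ p.1 < σ p.2) ↔ (prof v p.1 < prof v p.2))
          ⊆ Finset.univ.filter (fun v => ¬ (prof v p.1 < prof v p.2)) := by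
        intro v hv
        simp only [Finset.mem_filter, Finset.mem_univ, true_and] at hv ⊢
        tauto
      have hc := Finset.card_le_card hsub
      have hcompl := Finset.card_filter_add_card_filter_not
        (s := (Finset.univ : Finset (Fin n)))
        (p := fun v => prof v p.1 < prof v p.2)
      rw [Finset.card_univ, Fintype.card_fin] at hcompl
      omega
    · have hπ' : π p.2 < π p.1 := lt_of_le_of_ne (not_lt.mp hπ) hne.symm
      have hσ : σ p.1 < σ p.2 := by tauto
      have hs := hsorted p.2 p.1 hπ'
      have hsub : Finset.univ.filter
            (fun v => (σ p.1 < σ p.2) ↔ (prof v p.1 < prof v p.2))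
          ⊆ Finset.univ.filter (fun v => ¬ (prof v p.2 < prof v p.1)) := by
        intro v hv
        simp only [Finset.mem_filter, Finset.mem_univ, true_and] at hv ⊢
        intro h
        exact absurd ((hv.mp hσ).trans h) (lt_irrefl _)
      have hc := Finset.card_le_card hsub
      have hcompl := Finset.card_filter_add_card_filter_not
        (s := (Finset.univ : Finset (Fin n)))
        (p := fun v => prof v p.2 < prof v p.1)
      rw [Finset.card_univ, Fintype.card_fin] at hcompl
      omega
  -- double counting
  have hswap : ∑ v : Fin n, A v = ∑ p ∈ D, (Finset.univ.filter
      (fun v => (σ p.1 < σ p.2) ↔ (prof v p.1 < prof v p.2))).card := by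
    simp only [hA, Finset.card_filter]
    exact Finset.sum_comm
  -- sum bound
  have h4 : 4 * ∑ v : Fin n, A v ≤ D.card * n := by
    rw [hswap, Finset.mul_sum]
    calc ∑ p ∈ D, 4 * (Finset.univ.filter
          (fun v => (σ p.1 < σ p.2) ↔ (prof v p.1 < prof v p.2))).card
        ≤ ∑ p ∈ D, n := Finset.sum_le_sum hpair
      _ = D.card * n := by simp [Finset.sum_const, Nat.smul_one_eq_cast, mul_comm]
  -- prefCount rewrite
  have hPset : prefCount prof σ π = (Finset.univ.filter (fun v => B v < A v)).card := by
    unfold prefCount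
    congr 1
    apply Finset.filter_congr
    intro v _
    have h1 := hdecomp v
    constructor <;> intro h <;> omega
  have h1 : ∀ v ∈ Finset.univ.filter (fun v => B v < A v), D.card + 1 ≤ 2 * A v := by
    intro v hv
    simp only [Finset.mem_filter] at hv
    have := hAB v
    omega
  have h2 : prefCount prof σ π * (D.card + 1) ≤ 2 * ∑ v : Fin n, A v := by
    rw [hPset]
    calc (Finset.univ.filter (fun v => B v < A v)).card * (D.card + 1)
        = ∑ _v ∈ Finset.univ.filter (fun v => B v < A v), (D.card + 1) := by
          rw [Finset.sum_const, smul_eq_mul]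
      _ ≤ ∑ v ∈ Finset.univ.filter (fun v => B v < A v), 2 * A v :=
          Finset.sum_le_sum h1
      _ ≤ ∑ v : Fin n, 2 * A v :=
          Finset.sum_le_sum_of_subset (Finset.filter_subset _ _)
      _ = 2 * ∑ v : Fin n, A v := by rw [Finset.mul_sum]
  -- final contradiction
  have hfin : 2 * (prefCount prof σ π * (D.card + 1)) ≤ D.card * n := by
    omega
  nlinarith [hgt, hfin]
end
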